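/- arXiv:1504.01116 — 9 statements merged into one kernel-verified Lean document; each statement's English description precedes it below -/
import Mathlib

section
/- For every n ∈ ℕ^N \ {0} and t ∈ ℝ, the matrix Ξ_{n,t} (defined by the forward recursion Ξ_{n,t} = Σ_{k=1}^N A_k(t) Ξ_{n-e_k, t-Λ_k}) also satisfies the backward recursion Ξ_{n,t} = Σ_{k=1}^N Ξ_{n-e_k, t} A_k(t - Λ·n + Λ_k). -/
open Finset

/-- The recursively defined matrix coefficients `Ξ_{n,t}` also satisfy the
backward recursion `Ξ_{n,t} = ∑_k Ξ_{n-e_k,t} A_k(t - Λ·n + Λ_k)`. -/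
theorem stmt_1 {N d : ℕ} (hN : 0 < N) (hd : 0 < d)
    (Λ : Fin N → ℝ) (hΛ : ∀ i, 0 < Λ i)
    (A : ℝ → Fin N → Matrix (Fin d) (Fin d) ℂ)
    (Ξ : (Fin N → ℤ) → ℝ → Matrix (Fin d) (Fin d) ℂ)
    (hΞneg : ∀ (n : Fin N → ℤ) (t : ℝ), (∃ i, n i < 0) → Ξ n t = 0)
    (hΞzero : ∀ t : ℝ, Ξ 0 t = 1)
    (hΞrec : ∀ (n : Fin N → ℤ), (∀ i, 0 ≤ n i) → n ≠ 0 → ∀ t : ℝ,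
      Ξ n t = ∑ k, A t k * Ξ (n - Pi.single k 1) (t - Λ k))
    (n : Fin N → ℕ) (hn : n ≠ 0) (t : ℝ) :
    Ξ (fun i => (n i : ℤ)) t =
      ∑ k, Ξ ((fun i => (n i : ℤ)) - Pi.single k 1) t *
        A (t - (∑ i, Λ i * (n i : ℝ)) + Λ k) k := by
  suffices H : ∀ s : ℕ, ∀ n : Fin N → ℕ, ∑ i, n i = s → n ≠ 0 → ∀ t : ℝ,
      Ξ (fun i => (n i : ℤ)) t =
        ∑ k, Ξ ((fun i => (n i : ℤ)) - Pi.single k 1) t *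
          A (t - (∑ i, Λ i * (n i : ℝ)) + Λ k) k by
    exact H _ n rfl hn t
  clear hn n t
  intro s
  induction s using Nat.strong_induction_on with
  | _ s IH =>
  intro n hs hn t
  obtain ⟨m, hm⟩ : ∃ m, n m ≠ 0 := by
    by_contra h
    push_neg at h
    exact hn (funext fun i => h i)
  have hνpos : ∀ i, (0:ℤ) ≤ ((n i : ℤ)) := fun i => Int.natCast_nonneg _
  have hνne : (fun i => (n i : ℤ)) ≠ 0 := by
    intro h
    exact hm (by simpa using congrFun h m)
  have hs1 : 1 ≤ s := by
    rcases Nat.eq_zero_or_pos s with h | h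
    · subst h
      exact absurd (Finset.sum_eq_zero_iff.mp hs m (mem_univ m)) hm
    · exact h
  rcases eq_or_lt_of_le hs1 with h1 | h2
  · -- base case s = 1
    have hnm : n m = 1 := by
      have h2 : n m ≤ s := hs ▸ Finset.single_le_sum (fun i _ => Nat.zero_le _) (mem_univ m)
      omega
    have hkey : ∀ i, n i = if i = m then 1 else 0 := by
      intro i
      rcases eq_or_ne i m with rfl | hi
      · simp [hnm]
      · have := Finset.add_sum_erase univ n (mem_univ m)
        have hz : ∑ x ∈ univ.erase m, n x = 0 := by omega
        have := Finset.sum_eq_zero_iff.mp hz i (by simp [hi])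
        simp [hi, this]
    rw [hΞrec _ hνpos hνne t]
    rw [Finset.sum_eq_single m, Finset.sum_eq_single m]
    · have hsub : (fun i => (n i : ℤ)) - Pi.single m 1 = 0 := by
        funext i
        simp [Pi.single_apply, hkey i]
      have hΛsum : (∑ i, Λ i * (n i : ℝ)) = Λ m := by
        simp [hkey, apply_ite (Nat.cast : ℕ → ℝ), mul_ite]
      rw [hsub, hΞzero, hΞzero, hΛsum, mul_one, one_mul, sub_add_cancel]
    · intro k _ hk
      rw [hΞneg _ _ ⟨k, by simp [Pi.single_apply, hkey k, hk]⟩, zero_mul]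
    · intro h; exact absurd (mem_univ m) h
    · intro k _ hk
      rw [hΞneg _ _ ⟨k, by simp [Pi.single_apply, hkey k, hk]⟩, mul_zero]
    · intro h; exact absurd (mem_univ m) h
  · -- inductive step s ≥ 2
    rw [hΞrec _ hνpos hνne t]
    have step1 : ∀ k, Ξ ((fun i => (n i : ℤ)) - Pi.single k 1) (t - Λ k) =
        ∑ j, Ξ ((fun i => (n i : ℤ)) - Pi.single k 1 - Pi.single j 1) (t - Λ k) *
          A (t - (∑ i, Λ i * (n i : ℝ)) + Λ j) j := by
      intro k
      by_cases hk : n k = 0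
      · rw [hΞneg _ _ ⟨k, by simp [Pi.single_apply, hk]⟩]
        symm
        apply Finset.sum_eq_zero
        intro j _
        rw [hΞneg _ _ ⟨k, ?_⟩, zero_mul]
        simp only [Pi.sub_apply, Pi.single_apply, hk]
        by_cases hkj : k = j <;> simp [hkj]
      · set m' : Fin N → ℕ := fun i => n i - if i = k then 1 else 0 with hm'
        have hcast : (fun i => (m' i : ℤ)) = (fun i => (n i : ℤ)) - Pi.single k 1 := by
          funext i
          simp only [hm', Pi.sub_apply, Pi.single_apply]
          rcases eq_or_ne i k with rfl | hi
          · simp [Nat.cast_sub (by omega : 1 ≤ n i)]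
          · simp [hi]
        have hsplit := Finset.add_sum_erase univ n (mem_univ k)
        have hsplit' := Finset.add_sum_erase univ m' (mem_univ k)
        have herase : ∑ x ∈ univ.erase k, m' x = ∑ x ∈ univ.erase k, n x := by
          apply Finset.sum_congr rfl
          intro x hx
          simp [hm', (Finset.mem_erase.mp hx).1]
        have hsum : ∑ i, m' i = s - 1 := by
          have hmk : m' k = n k - 1 := by simp [hm']
          omega
        have hne : m' ≠ 0 := by
          intro h
          rw [h] at hsum
          simp at hsum
          omega
        have hIH := IH (s - 1) (by omega) m' hsum hne (t - Λ k)
        rw [hcast] at hIH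
        rw [hIH]
        apply Finset.sum_congr rfl
        intro j _
        congr 2
        have hΛm' : (∑ i, Λ i * (m' i : ℝ)) = (∑ i, Λ i * (n i : ℝ)) - Λ k := by
          have hc : ∀ i, (m' i : ℝ) = (n i : ℝ) - if i = k then 1 else 0 := by
            intro i
            simp only [hm']
            rcases eq_or_ne i k with rfl | hi
            · simp [Nat.cast_sub (by omega : 1 ≤ n i)]
            · simp [hi]
          simp_rw [hc, mul_sub, Finset.sum_sub_distrib, mul_ite, mul_one, mul_zero,
            Finset.sum_ite_eq', mem_univ, if_true]
        rw [hΛm']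
        ring
    simp_rw [step1, Finset.mul_sum]
    rw [Finset.sum_comm]
    apply Finset.sum_congr rfl
    intro j _
    simp_rw [← mul_assoc, ← Finset.sum_mul]
    congr 1
    by_cases hj : n j = 0
    · have hz1 : Ξ ((fun i => (n i : ℤ)) - Pi.single j 1) t = 0 := by
        apply hΞneg
        exact ⟨j, by simp [Pi.single_apply, hj]⟩
      rw [hz1]
      apply Finset.sum_eq_zero
      intro k _
      have hz2 : Ξ ((fun i => (n i : ℤ)) - Pi.single k 1 - Pi.single j 1) (t - Λ k) = 0 := by
        apply hΞneg
        refine ⟨j, ?_⟩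
        simp only [Pi.sub_apply, Pi.single_apply, hj]
        by_cases hkj : j = k <;> simp [hkj]
      rw [hz2, mul_zero]
    · have hpos : ∀ i, (0:ℤ) ≤ (((fun i => (n i : ℤ)) - Pi.single j 1 : Fin N → ℤ)) i := by
        intro i
        simp only [Pi.sub_apply, Pi.single_apply]
        rcases eq_or_ne i j with rfl | hi
        · simp; omega
        · simp [hi]
      have hne : (fun i => (n i : ℤ)) - Pi.single j 1 ≠ 0 := by
        intro h
        have hkey : ∀ i, n i = if i = j then 1 else 0 := by
          intro i
          have := congrFun h i
          simp only [Pi.sub_apply, Pi.single_apply, Pi.zero_apply, sub_eq_zero] at this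
          rcases eq_or_ne i j with rfl | hi
          · simp at this ⊢; exact_mod_cast this
          · simp [hi] at this ⊢; exact_mod_cast this
        have : ∑ i, n i = 1 := by
          simp [hkey]
        omega
      rw [hΞrec _ hpos hne t]
      apply Finset.sum_congr rfl
      intro k _
      congr 1
      rw [sub_right_comm]
end

section
/- Let Λ ∈ (ℝ_{>0})^N. Then there exist h ∈ {1,…,N}, a vector ℓ = (ℓ_1,…,ℓ_h) ∈ (ℝ_{>0})^h with rationally independent components, and a matrix B ∈ M_{N,h}(ℕ) with rank(B) = h, such that Λ = Bℓ. -/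
/-!
Induct over the entries of `Λ`, keeping positive `ℚ`-independent generators `ℓ` whose `ℚ`-span
lies in that of the entries seen so far and whose `ℕ`-cone contains them. A new entry `x` outside
the `ℚ`-span of `ℓ` is appended to `ℓ`. Otherwise, after dividing `ℓ` by a common denominator,
`x = ∑ (p j - n j) ℓ j` with `p, n` natural of disjoint supports. Replace `ℓ j` by `ℓ j / M`
where `n j ≠ 0` and by `ℓ j - k j w` elsewhere, with `w = (∑ n i ℓ i) / M`. Then `w` is an
`ℕ`-combination of the new generators `m`, so the old ones lie in their `ℕ`-cone, and so does
`x = ∑ p j m j + (∑ p j k j - M) w` once `∑ p j k j ≥ M`. Taking `k j = ⌈M ℓ j / ∑ p i ℓ i⌉₊`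
achieves this, and keeps the new generators positive for `M` large because `x > 0`.

Finally, writing each `ℓ j` as a rational combination of the entries gives a rational `C` with
`C B = 1` by independence of `ℓ`, so `B` has rank `h`.
-/

open Finset Set Submodule

theorem LinearIndependent.of_span_le_span {ι K V : Type*} [Fintype ι] [DivisionRing K]
    [AddCommGroup V] [Module K V] {v w : ι → V} (hv : LinearIndependent K v)
    (hvw : span K (range v) ≤ span K (range w)) : LinearIndependent K w := by
  rw [linearIndependent_iff_card_le_finrank_span] at hv ⊢
  have := FiniteDimensional.span_of_finite K (Set.finite_range w)
  exact hv.trans (Submodule.finrank_mono hvw)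

theorem Matrix.rank_map_ratCast_eq_card {m n : Type*} [Fintype m] [Fintype n] [DecidableEq n]
    {B : Matrix m n ℚ} {ℓ : n → ℝ} {Λ : m → ℝ} (hℓ : LinearIndependent ℚ ℓ)
    (hB : ∀ i, Λ i = ∑ j, (B i j : ℝ) * ℓ j) (hΛ : span ℚ (range ℓ) ≤ span ℚ (range Λ)) :
    (B.map (Rat.cast : ℚ → ℝ)).rank = Fintype.card n := by
  choose C hC using fun j =>
    (mem_span_range_iff_exists_fun ℚ).1 (hΛ (subset_span (mem_range_self j)))
  have hCB : Matrix.of C * B = 1 := by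
    refine Matrix.ext fun j => congrFun (hℓ.fintypeLinearCombination_injective ?_)
    calc Fintype.linearCombination ℚ ℓ ((Matrix.of C * B) j)
        = ∑ i, (C j i : ℝ) * ∑ k, (B i k : ℝ) * ℓ k := by
          simp only [Fintype.linearCombination_apply, Matrix.mul_apply, Matrix.of_apply,
            Rat.smul_def, Rat.cast_sum, Rat.cast_mul, sum_mul, mul_sum, mul_assoc]
          exact sum_comm
      _ = ℓ j := by simpa only [← hB, Rat.smul_def] using hC j
      _ = Fintype.linearCombination ℚ ℓ ((1 : Matrix n n ℚ) j) := by
          rw [show (1 : Matrix n n ℚ) j = Pi.single j 1 from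
              funext fun k => Matrix.one_eq_pi_single,
            Fintype.linearCombination_apply_single, one_smul]
  refine le_antisymm (rank_le_card_width _) ?_
  calc Fintype.card n = (1 : Matrix n n ℝ).rank := rank_one.symm
    _ = ((Matrix.of C).map (Rat.castHom ℝ) * B.map (Rat.castHom ℝ)).rank := by
      rw [← Matrix.map_mul, hCB, Matrix.map_one _ (map_zero _) (map_one _)]
    _ ≤ _ := rank_mul_le_right _ _

section Refinement

variable {ι : Type*} [Fintype ι]

section Shear

variable (ℓ : ι → ℝ) (n k : ι → ℕ) (M : ℕ)

noncomputable def shear (j : ι) : ℝ :=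
  if n j = 0 then ℓ j - k j * ((∑ i, n i * ℓ i) / M) else ℓ j / M

theorem shear_mem_span (j : ι) : shear ℓ n k M j ∈ span ℚ (range ℓ) := by
  have hℓ : ∀ i, ℓ i ∈ span ℚ (range ℓ) := fun i => subset_span (mem_range_self i)
  have hT : (∑ i, n i * ℓ i) ∈ span ℚ (range ℓ) :=
    sum_mem fun i _ => by simpa [Rat.smul_def] using smul_mem _ (n i : ℚ) (hℓ i)
  unfold shear
  split_ifs
  · refine sub_mem (hℓ j) ?_
    rw [← mul_div_assoc]
    simpa [Rat.smul_def, div_mul_eq_mul_div] using smul_mem _ (k j / M : ℚ) hT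
  · simpa [Rat.smul_def, div_eq_inv_mul] using smul_mem _ (M⁻¹ : ℚ) (hℓ j)

theorem shear_pos (hℓ : ∀ j, 0 < ℓ j) (hM : 0 < M)
    (hk : ∀ j, k j * ((∑ i, n i * ℓ i) / M) < ℓ j) (j : ι) : 0 < shear ℓ n k M j := by
  unfold shear
  split_ifs
  · exact sub_pos.2 (hk j)
  · exact div_pos (hℓ j) (Nat.cast_pos.2 hM)

theorem sum_div_mem_closure_shear :
    (∑ i, n i * ℓ i) / M ∈ AddSubmonoid.closure (range (shear ℓ n k M)) := by
  have hw : (∑ i, n i * ℓ i) / M = ∑ i, n i • shear ℓ n k M i := by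
    rw [sum_div]
    refine sum_congr rfl fun i _ => ?_
    unfold shear
    split_ifs with hi <;> simp [hi, mul_div_assoc]
  rw [hw]
  exact sum_mem fun i _ => nsmul_mem (AddSubmonoid.subset_closure (mem_range_self i)) _

theorem mem_closure_shear (hM : M ≠ 0) (j : ι) :
    ℓ j ∈ AddSubmonoid.closure (range (shear ℓ n k M)) := by
  have hm : shear ℓ n k M j ∈ AddSubmonoid.closure (range (shear ℓ n k M)) :=
    AddSubmonoid.subset_closure (mem_range_self j)
  by_cases hj : n j = 0
  · have hℓ : ℓ j = shear ℓ n k M j + k j • ((∑ i, n i * ℓ i) / M) := by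
      simp [shear, hj, nsmul_eq_mul]
    exact hℓ ▸ add_mem hm (nsmul_mem (sum_div_mem_closure_shear ℓ n k M) _)
  · have hℓ : ℓ j = M • shear ℓ n k M j := by
      simp [shear, hj, nsmul_eq_mul, mul_div_cancel₀ _ (Nat.cast_ne_zero.2 hM : (M : ℝ) ≠ 0)]
    exact hℓ ▸ nsmul_mem hm _

theorem sum_sub_sum_mem_closure_shear (p : ι → ℕ) (hM : M ≠ 0) (hpn : ∀ j, p j = 0 ∨ n j = 0)
    (hk : M ≤ ∑ j, p j * k j) :
    ∑ j, p j * ℓ j - ∑ j, n j * ℓ j ∈ AddSubmonoid.closure (range (shear ℓ n k M)) := by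
  set w := (∑ i, n i * ℓ i) / M
  have hp : ∑ j, p j * ℓ j = ∑ j, p j * shear ℓ n k M j + (∑ j, p j * k j : ℕ) * w := by
    rw [Nat.cast_sum, sum_mul, ← sum_add_distrib]
    refine sum_congr rfl fun j _ => ?_
    rcases hpn j with h | h
    · simp [h]
    · simp only [shear, h, if_true]
      push_cast
      ring
  have hn : ∑ j, n j * ℓ j = M * w := (mul_div_cancel₀ _ (Nat.cast_ne_zero.2 hM)).symm
  have hx : ∑ j, p j * ℓ j - ∑ j, n j * ℓ j
      = ∑ j, p j • shear ℓ n k M j + (∑ j, p j * k j - M) • w := by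
    simp only [hp, hn, nsmul_eq_mul, Nat.cast_sub hk]
    ring
  rw [hx]
  exact add_mem (sum_mem fun j _ => nsmul_mem (AddSubmonoid.subset_closure (mem_range_self j)) _)
    (nsmul_mem (sum_div_mem_closure_shear ℓ n k M) _)

end Shear

open Filter in
theorem exists_refinement_of_int_sum_pos {ℓ : ι → ℝ}
    (hℓ : ∀ j, 0 < ℓ j) (q : ι → ℤ) (hx : 0 < ∑ j, (q j : ℝ) * ℓ j) :
    ∃ m : ι → ℝ, (∀ j, 0 < m j) ∧ span ℚ (range m) ≤ span ℚ (range ℓ) ∧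
      AddSubmonoid.closure (range ℓ) ≤ AddSubmonoid.closure (range m) ∧
      ∑ j, (q j : ℝ) * ℓ j ∈ AddSubmonoid.closure (range m) := by
  set p : ι → ℕ := fun j => (q j).toNat
  set n : ι → ℕ := fun j => (-q j).toNat
  set S := ∑ j, p j * ℓ j
  set T := ∑ j, n j * ℓ j
  have hST : ∑ j, (q j : ℝ) * ℓ j = S - T := by
    rw [← sum_sub_distrib]
    refine sum_congr rfl fun j _ => ?_
    have hq := congrArg (Int.cast : ℤ → ℝ) (Int.toNat_sub_toNat_neg (q j))
    push_cast at hq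
    rw [← sub_mul, hq]
  have hT : 0 ≤ T := sum_nonneg fun j _ => mul_nonneg (Nat.cast_nonneg _) (hℓ j).le
  have hS : 0 < S := by linarith
  obtain ⟨M, hM, hMbig⟩ : ∃ M : ℕ, 0 < M ∧ ∀ j, T * S < M * (ℓ j * (S - T)) :=
    ((eventually_gt_atTop 0).and (eventually_all.2 fun j =>
      (tendsto_natCast_atTop_atTop.atTop_mul_const
        (mul_pos (hℓ j) (by linarith))).eventually_gt_atTop _)).exists
  set k : ι → ℕ := fun j => ⌈M * ℓ j / S⌉₊
  have hMk : M ≤ ∑ j, p j * k j := by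
    have hsum : ∑ j, (p j : ℝ) * (M * ℓ j / S) = M := calc
      _ = M / S * ∑ j, p j * ℓ j := by
        rw [mul_sum]
        exact sum_congr rfl fun j _ => by ring
      _ = M := div_mul_cancel₀ _ hS.ne'
    have : (M : ℝ) ≤ ∑ j, (p j : ℝ) * (k j : ℝ) := hsum ▸ sum_le_sum fun j _ =>
      mul_le_mul_of_nonneg_left (Nat.le_ceil _) (Nat.cast_nonneg _)
    exact_mod_cast this
  have hkT : ∀ j, k j * (T / M) < ℓ j := by
    intro j
    have hk : (k j : ℝ) * S < M * ℓ j + S := by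
      have := Nat.ceil_lt_add_one (div_nonneg (mul_pos (Nat.cast_pos.2 hM) (hℓ j)).le hS.le)
      rwa [← lt_div_iff₀ hS, add_div, div_self hS.ne']
    rw [mul_div_assoc', div_lt_iff₀ (Nat.cast_pos.2 hM)]
    nlinarith [mul_le_mul_of_nonneg_right hk.le hT, hMbig j]
  refine ⟨shear ℓ n k M, shear_pos ℓ n k M hℓ hM hkT,
    span_le.2 (range_subset_iff.2 (shear_mem_span ℓ n k M)),
    AddSubmonoid.closure_le.2 (range_subset_iff.2 (mem_closure_shear ℓ n k M hM.ne')), ?_⟩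
  rw [hST]
  exact sum_sub_sum_mem_closure_shear ℓ n k M p hM.ne' (fun j => by simp only [p, n]; omega) hMk

theorem exists_int_sum_div_of_mem_span_rat {ℓ : ι → ℝ} {x : ℝ}
    (hx : x ∈ span ℚ (range ℓ)) :
    ∃ d : ℕ, 0 < d ∧ ∃ q : ι → ℤ, x = ∑ j, (q j : ℝ) * (ℓ j / d) := by
  classical
  obtain ⟨c, rfl⟩ := (mem_span_range_iff_exists_fun ℚ).1 hx
  refine ⟨∏ j, (c j).den, prod_pos fun j _ => (c j).pos,
    fun j => (c j).num * ∏ i ∈ univ.erase j, ((c i).den : ℤ), sum_congr rfl fun j _ => ?_⟩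
  have hnum : ((c j).num : ℝ) = c j * (c j).den := by
    exact_mod_cast (Rat.mul_den_eq_num (c j)).symm
  rw [← mul_prod_erase univ (fun i => (c i).den) (mem_univ j), Rat.smul_def]
  push_cast
  rw [hnum]
  field_simp

theorem exists_refinement_of_mem_span {ℓ : ι → ℝ} (hℓ : ∀ j, 0 < ℓ j)
    {x : ℝ} (hx : 0 < x) (hxℓ : x ∈ span ℚ (range ℓ)) :
    ∃ m : ι → ℝ, (∀ j, 0 < m j) ∧ span ℚ (range m) ≤ span ℚ (range ℓ) ∧
      AddSubmonoid.closure (range ℓ) ≤ AddSubmonoid.closure (range m) ∧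
      x ∈ AddSubmonoid.closure (range m) := by
  obtain ⟨d, hd, q, rfl⟩ := exists_int_sum_div_of_mem_span_rat hxℓ
  have hd' : (0 : ℝ) < d := Nat.cast_pos.2 hd
  obtain ⟨m, hm, hspan, hcl, hxm⟩ :=
    exists_refinement_of_int_sum_pos (fun j => div_pos (hℓ j) hd') q hx
  refine ⟨m, hm, hspan.trans (span_le.2 ?_), le_trans (AddSubmonoid.closure_le.2 ?_) hcl, hxm⟩
  · rintro _ ⟨j, rfl⟩
    simpa [Rat.smul_def, div_eq_inv_mul] using
      smul_mem _ (d⁻¹ : ℚ) (subset_span (mem_range_self j) : ℓ j ∈ span ℚ (range ℓ))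
  · rintro _ ⟨j, rfl⟩
    have hj : ℓ j = d • (ℓ j / d) := by rw [nsmul_eq_mul, mul_div_cancel₀ _ hd'.ne']
    exact hj ▸ nsmul_mem (AddSubmonoid.subset_closure (mem_range_self j)) _

end Refinement

theorem exists_linearIndependent_nat_generators (s : Finset ℝ) (hs : ∀ x ∈ s, 0 < x) :
    ∃ (h : ℕ) (ℓ : Fin h → ℝ), (∀ j, 0 < ℓ j) ∧ LinearIndependent ℚ ℓ ∧
      span ℚ (range ℓ) ≤ span ℚ s ∧ (s : Set ℝ) ⊆ AddSubmonoid.closure (range ℓ) := by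
  classical
  induction s using Finset.induction_on with
  | empty => exact ⟨0, Fin.elim0, Fin.rec0, linearIndependent_empty_type, by simp, by simp⟩
  | insert x s _ ih =>
    obtain ⟨h, ℓ, hℓ, hind, hspan, hcl⟩ := ih fun y hy => hs y (mem_insert_of_mem hy)
    have hx : 0 < x := hs x (mem_insert_self x s)
    have hspan' : span ℚ (range ℓ) ≤ span ℚ (insert x s : Finset ℝ) :=
      hspan.trans (span_mono (by simp [Set.subset_insert]))
    by_cases hxℓ : x ∈ span ℚ (range ℓ)
    · obtain ⟨m, hm, hmℓ, hℓm, hxm⟩ := exists_refinement_of_mem_span hℓ hx hxℓ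
      refine ⟨h, m, hm, hind.of_span_le_span ?_, hmℓ.trans hspan', ?_⟩
      · exact span_le.2 ((AddSubmonoid.closure_le.1 hℓm).trans closure_subset_span)
      · rw [coe_insert]
        exact Set.insert_subset hxm (hcl.trans hℓm)
    · refine ⟨h + 1, Fin.cons x ℓ, Fin.cases hx hℓ, linearIndependent_finCons.2 ⟨hind, hxℓ⟩,
        ?_, ?_⟩
      · rw [Fin.range_cons, span_le]
        exact Set.insert_subset (subset_span (by simp)) fun y hy => hspan' (subset_span hy)
      · rw [coe_insert, Fin.range_cons]
        exact Set.insert_subset (AddSubmonoid.subset_closure (mem_insert x _))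
          (hcl.trans (AddSubmonoid.closure_mono (Set.subset_insert x _)))

/-- Every `Λ ∈ (ℝ_{>0})^N` can be written as `Λ = B ℓ` with
`B ∈ M_{N,h}(ℕ)` of rank `h` and `ℓ ∈ (ℝ_{>0})^h` with rationally independent
components, for some `h ∈ {1,…,N}`. -/
theorem stmt_3 {N : ℕ} (hN : 0 < N) (Λ : Fin N → ℝ) (hΛ : ∀ i, 0 < Λ i) :
    ∃ (h : ℕ), 1 ≤ h ∧ h ≤ N ∧
      ∃ (ℓ : Fin h → ℝ) (B : Matrix (Fin N) (Fin h) ℕ),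
        (∀ j, 0 < ℓ j) ∧ LinearIndependent ℚ ℓ ∧
        (B.map (fun x : ℕ => (x : ℝ))).rank = h ∧
        ∀ i, Λ i = ∑ j, (B i j : ℝ) * ℓ j := by
  classical
  obtain ⟨h, ℓ, hℓ, hind, hspan, hcl⟩ :=
    exists_linearIndependent_nat_generators (Finset.univ.image Λ) (by simpa using hΛ)
  choose B hB using fun i => AddSubmonoid.mem_closure_range_iff_of_fintype.1
    (hcl (by simp : Λ i ∈ (Finset.univ.image Λ : Set ℝ)))
  have hBℓ : ∀ i, Λ i = ∑ j, (B i j : ℝ) * ℓ j := by simpa [nsmul_eq_mul] using hB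
  have hrank : ((Matrix.of B).map (fun x : ℕ => (x : ℝ))).rank = h := by
    simpa [Matrix.map_map, Function.comp_def] using Matrix.rank_map_ratCast_eq_card
      (B := (Matrix.of B).map (Nat.cast : ℕ → ℚ)) hind (by simpa using hBℓ) (by simpa using hspan)
  refine ⟨h, Nat.pos_of_ne_zero ?_, hrank ▸ Matrix.rank_le_height _, ℓ, Matrix.of B, hℓ, hind,
    hrank, hBℓ⟩
  rintro rfl
  exact (hΛ ⟨0, hN⟩).ne' (by simpa using hBℓ ⟨0, hN⟩)
end

section
/- Let Λ ∈ (ℝ_{>0})^N, B ∈ M_{N,h}(ℚ) with rank(B) = h, and ℓ ∈ (ℝ_{>0})^h with rationally independent components such that Λ = Bℓ. Define Z(Λ) = {n ∈ ℤ^N | Λ·n = 0} and V(Λ) = {L ∈ ℝ^N | Z(Λ) ⊆ Z(L)}. Then V(Λ) = range(B). -/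
open Finset
open Matrix

-- clearing denominators
lemma int_clear {N : ℕ} (q : Fin N → ℚ) :
    ∃ (d : ℤ) (n : Fin N → ℤ), d ≠ 0 ∧ ∀ i, (n i : ℚ) = (d : ℚ) * q i := by
  obtain ⟨b, hb⟩ := IsLocalization.exist_integer_multiples (nonZeroDivisors ℤ)
    (Finset.univ : Finset (Fin N)) q
  refine ⟨(b : ℤ), fun i => (hb i (Finset.mem_univ i)).choose, ?_, fun i => ?_⟩
  · exact nonZeroDivisors.coe_ne_zero b
  · have := (hb i (Finset.mem_univ i)).choose_spec
    simpa [zsmul_eq_mul] using this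

/-- If `Λ = Bℓ` with `B ∈ M_{N,h}(ℚ)` of rank `h` and `ℓ` positive with
rationally independent components, then `V(Λ) = {L | Z(Λ) ⊆ Z(L)}` equals the range of
the linear map induced by `B` on `ℝ^h`. -/
theorem stmt_4 {N h : ℕ} (Λ : Fin N → ℝ) (hΛ : ∀ i, 0 < Λ i)
    (B : Matrix (Fin N) (Fin h) ℚ) (hB : B.rank = h)
    (ℓ : Fin h → ℝ) (hℓpos : ∀ j, 0 < ℓ j) (hℓind : LinearIndependent ℚ ℓ)
    (hΛB : ∀ i, Λ i = ∑ j, (B i j : ℝ) * ℓ j) :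
    {L : Fin N → ℝ | ∀ n : Fin N → ℤ,
        (∑ i, Λ i * (n i : ℝ)) = 0 → (∑ i, L i * (n i : ℝ)) = 0}
      = Set.range (fun x : Fin h → ℝ => fun i => ∑ j, (B i j : ℝ) * x j) := by
  have key : ∀ n : Fin N → ℤ, (∑ i, Λ i * (n i : ℝ))
      = ∑ j, ((∑ i, B i j * (n i : ℚ) : ℚ) : ℝ) * ℓ j := by
    intro n
    simp_rw [hΛB, Finset.sum_mul]
    rw [Finset.sum_comm]
    push_cast
    apply Finset.sum_congr rfl
    intro j _
    rw [Finset.sum_mul]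
    apply Finset.sum_congr rfl
    intro i _
    ring
  -- matrix setup over ℚ
  have hu : IsUnit (Bᵀ * B) := by
    have h1 : (Bᵀ * B).rank = h := by rw [Matrix.rank_transpose_mul_self, hB]
    rw [← Matrix.mulVec_surjective_iff_isUnit]
    have htop : LinearMap.range (Bᵀ * B).mulVecLin = ⊤ := by
      apply Submodule.eq_top_of_finrank_eq
      rw [← Matrix.rank, h1, Module.finrank_pi, Fintype.card_fin]
    intro y
    have := htop ▸ Submodule.mem_top (x := y)
    exact this.imp fun x hx => hx
  have hdet : IsUnit (Bᵀ * B).det := (Matrix.isUnit_iff_isUnit_det _).mp hu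
  set G : Matrix (Fin h) (Fin h) ℚ := (Bᵀ * B)⁻¹ with hGdef
  have hGr : (Bᵀ * B) * G = 1 := Matrix.mul_nonsing_inv _ hdet
  set P : Matrix (Fin N) (Fin N) ℚ := B * G * Bᵀ with hPdef
  have hBtP : Bᵀ * P = Bᵀ := by
    calc Bᵀ * (B * G * Bᵀ) = ((Bᵀ * B) * G) * Bᵀ := by
          rw [Matrix.mul_assoc, Matrix.mul_assoc, Matrix.mul_assoc]
      _ = Bᵀ := by rw [hGr, Matrix.one_mul]
  have hPP : P * P = P := by
    calc P * P = (B * G) * (Bᵀ * P) := by rw [hPdef, Matrix.mul_assoc]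
      _ = P := by rw [hBtP]
  have hGsymm : Gᵀ = G := by
    rw [hGdef, Matrix.transpose_nonsing_inv]
    congr 1
    rw [Matrix.transpose_mul, Matrix.transpose_transpose]
  have hPsymm : Pᵀ = P := by
    rw [hPdef, Matrix.transpose_mul, Matrix.transpose_mul, Matrix.transpose_transpose,
      hGsymm, Matrix.mul_assoc]
  set M : Matrix (Fin N) (Fin N) ℚ := 1 - P with hMdef
  have hMsymm : Mᵀ = M := by rw [hMdef, Matrix.transpose_sub, Matrix.transpose_one, hPsymm]
  have hMM : M * M = M := by
    rw [hMdef, Matrix.mul_sub, Matrix.mul_one, Matrix.sub_mul, Matrix.one_mul, hPP]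
    abel
  have hBtM : Bᵀ * M = 0 := by
    rw [hMdef, Matrix.mul_sub, Matrix.mul_one, hBtP, sub_self]
  -- kernel columns
  have hcol : ∀ (k : Fin N) (j : Fin h), (∑ i, B i j * M i k) = 0 := by
    intro k j
    have : (Bᵀ * M) j k = 0 := by rw [hBtM]; rfl
    simpa [Matrix.mul_apply, Matrix.transpose_apply] using this
  ext L
  simp only [Set.mem_setOf_eq, Set.mem_range]
  constructor
  · intro H
    -- L ⟂ each (cast) column of M
    have hLq : ∀ k : Fin N, (∑ i, L i * ((M i k : ℚ) : ℝ)) = 0 := by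
      intro k
      obtain ⟨d, n, hd, hn⟩ := int_clear (fun i => M i k)
      have hΛn : (∑ i, Λ i * (n i : ℝ)) = 0 := by
        rw [key]
        apply Finset.sum_eq_zero
        intro j _
        have : (∑ i, B i j * (n i : ℚ)) = 0 := by
          have : (∑ i, B i j * (n i : ℚ)) = (d : ℚ) * ∑ i, B i j * M i k := by
            rw [Finset.mul_sum]
            exact Finset.sum_congr rfl fun i _ => by rw [hn i]; ring
          rw [this, hcol, mul_zero]
        rw [this]
        simp
      have hLn := H n hΛn
      have : (∑ i, L i * ((n i : ℤ) : ℝ)) = (d : ℝ) * ∑ i, L i * ((M i k : ℚ) : ℝ) := by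
        rw [Finset.mul_sum]
        apply Finset.sum_congr rfl
        intro i _
        have h3 : ((n i : ℤ) : ℝ) = (d : ℝ) * ((M i k : ℚ) : ℝ) := by
          exact_mod_cast hn i
        rw [h3]; ring
      rw [this] at hLn
      have hd' : (d : ℝ) ≠ 0 := Int.cast_ne_zero.mpr hd
      exact (mul_eq_zero.mp hLn).resolve_left hd'
    -- real matrices
    set ρ : ℚ →+* ℝ := Rat.castHom ℝ with hρ
    set Mc : Matrix (Fin N) (Fin N) ℝ := M.map ρ with hMc
    set v : Fin N → ℝ := Mc *ᵥ L with hv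
    have hLv : L ⬝ᵥ v = 0 := by
      rw [hv, Matrix.dotProduct_mulVec]
      have : L ᵥ* Mc = 0 := by
        funext k
        have : (L ᵥ* Mc) k = ∑ i, L i * ((M i k : ℚ) : ℝ) := by
          simp [Matrix.vecMul, dotProduct, hMc, Matrix.map_apply]
        rw [this, hLq k]; rfl
      rw [this, zero_dotProduct]
    have hvv : v ⬝ᵥ v = 0 := by
      have hMcsymm : Mcᵀ = Mc := by
        rw [hMc, ← Matrix.transpose_map, hMsymm]
      have hMcMc : Mc * Mc = Mc := by
        rw [hMc, ← Matrix.map_mul, hMM]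
      have h2 : v ᵥ* Mc = Mc *ᵥ v := by
        conv_lhs => rw [← hMcsymm]
        rw [Matrix.vecMul_transpose]
      calc v ⬝ᵥ v = (v ᵥ* Mc) ⬝ᵥ L := by rw [hv, Matrix.dotProduct_mulVec]
        _ = ((Mc * Mc) *ᵥ L) ⬝ᵥ L := by rw [h2, hv, Matrix.mulVec_mulVec]
        _ = v ⬝ᵥ L := by rw [hMcMc, hv]
        _ = 0 := by rw [dotProduct_comm]; exact hLv
    have hv0 : v = 0 := by
      rwa [dotProduct_self_eq_zero] at hvv
    -- conclude L = Pc *ᵥ L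
    have hLP : (P.map ρ) *ᵥ L = L := by
      have h4 : Mc *ᵥ L = (1 : Matrix (Fin N) (Fin N) ℝ) *ᵥ L - (P.map ρ) *ᵥ L := by
        rw [hMc, hMdef, Matrix.map_sub _ (map_sub ρ),
          Matrix.map_one ρ (map_zero ρ) (map_one ρ), Matrix.sub_mulVec]
      rw [← hv, hv0, Matrix.one_mulVec] at h4
      exact (sub_eq_zero.mp h4.symm).symm
    refine ⟨((G * Bᵀ).map ρ) *ᵥ L, ?_⟩
    funext i
    have : (P.map ρ) *ᵥ L = (B.map ρ) *ᵥ (((G * Bᵀ).map ρ) *ᵥ L) := by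
      rw [Matrix.mulVec_mulVec, ← Matrix.map_mul, hPdef, Matrix.mul_assoc]
    rw [this] at hLP
    have := congrFun hLP i
    simpa [Matrix.mulVec, dotProduct, Matrix.map_apply] using this
  · rintro ⟨x, rfl⟩
    intro n hn
    rw [key] at hn
    have hc : ∀ j, (∑ i, B i j * (n i : ℚ)) = 0 := by
      have := Fintype.linearIndependent_iff.mp hℓind
        (fun j => ∑ i, B i j * (n i : ℚ)) ?_
      · exact this
      · rw [← hn]
        apply Finset.sum_congr rfl
        intro j _
        rw [Rat.smul_def]
    have : (∑ i, (∑ j, (B i j : ℝ) * x j) * (n i : ℝ))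
        = ∑ j, ((∑ i, B i j * (n i : ℚ) : ℚ) : ℝ) * x j := by
      simp_rw [Finset.sum_mul]
      rw [Finset.sum_comm]
      push_cast
      apply Finset.sum_congr rfl
      intro j _
      rw [Finset.sum_mul]
      apply Finset.sum_congr rfl
      intro i _
      ring
    rw [this]
    apply Finset.sum_eq_zero
    intro j _
    rw [hc j]
    simp
end

section
/- Let Λ ∈ (ℝ_{>0})^N, L ∈ (ℝ_{>0})^N with Z(Λ) ⊆ Z(L), and A : ℝ → M_d(ℂ)^N. Define the equivalence n ≈ n' iff Λ·n = Λ·n', and set \hat{Ξ}_{[n],t} = Σ_{n' ≈ n} Ξ^{L,A}_{n',t} (a finite sum). Then for every n ∈ ℕ^N \ {0} and t ∈ ℝ, \hat{Ξ}_{[n],t} = Σ_{[j] ∈ J} \hat{A}_{[j]}(t) \hat{Ξ}_{[n - e_j], t - L_j}, where J is the quotient of {1,…,N} by i ∼ j iff Λ_i = Λ_j and \hat{A}_{[i]}(t) = Σ_{j ∼ i} A_j(t). -/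
open Finset Classical

lemma aux_wsingle {N : ℕ} (Λ : Fin N → ℝ) (k : Fin N) :
    (∑ i, Λ i * (((Pi.single k 1 : Fin N → ℤ) i : ℤ) : ℝ)) = Λ k := by
  rw [Finset.sum_eq_single k]
  · simp
  · intro j _ hj; simp [Pi.single_eq_of_ne hj]
  · simp

lemma aux_wsub {N : ℕ} (Λ : Fin N → ℝ) (a b : Fin N → ℤ) :
    (∑ i, Λ i * (((a - b) i : ℤ) : ℝ))
      = (∑ i, Λ i * ((a i : ℤ) : ℝ)) - ∑ i, Λ i * ((b i : ℤ) : ℝ) := by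
  rw [← Finset.sum_sub_distrib]
  refine Finset.sum_congr rfl fun i _ => ?_
  simp only [Pi.sub_apply]
  push_cast
  ring

lemma aux_fin {N : ℕ} (hN : N ≠ 0) (Λ : Fin N → ℝ) (hΛ : ∀ i, 0 < Λ i) (v : ℝ) :
    {m : Fin N → ℤ | (∑ i, Λ i * ((m i : ℤ) : ℝ)) = v ∧ ∀ i, 0 ≤ m i}.Finite := by
  have hne : Nonempty (Fin N) := ⟨⟨0, Nat.pos_of_ne_zero hN⟩⟩
  have hune : (Finset.univ : Finset (Fin N)).Nonempty := Finset.univ_nonempty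
  set lm : ℝ := Finset.univ.inf' hune Λ with hlm
  have hlm0 : 0 < lm := by
    rw [hlm, Finset.lt_inf'_iff]
    exact fun i _ => hΛ i
  set B : ℤ := ⌈v / lm⌉ with hB
  apply Set.Finite.subset (Set.Finite.pi (fun i : Fin N => Set.finite_Icc (0 : ℤ) B))
  rintro m ⟨hsum, hpos⟩
  intro i _
  refine ⟨hpos i, ?_⟩
  have h1 : Λ i * ((m i : ℤ) : ℝ) ≤ v := by
    rw [← hsum]
    exact Finset.single_le_sum (f := fun j => Λ j * ((m j : ℤ) : ℝ))
      (fun j _ => mul_nonneg (hΛ j).le (by exact_mod_cast hpos j)) (Finset.mem_univ i)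
  have h2 : lm ≤ Λ i := Finset.inf'_le _ (Finset.mem_univ i)
  have hmi : (0 : ℝ) ≤ (m i : ℝ) := by exact_mod_cast hpos i
  have h3 : ((m i : ℤ) : ℝ) ≤ v / lm := by
    rw [le_div_iff₀ hlm0]
    nlinarith
  have h4 : ((m i : ℤ) : ℝ) ≤ (B : ℝ) := h3.trans (Int.le_ceil _)
  exact_mod_cast h4

lemma aux_finsum {N d : ℕ} (hN : N ≠ 0) (Λ : Fin N → ℝ) (hΛ : ∀ i, 0 < Λ i) (v : ℝ)
    (g : (Fin N → ℤ) → Matrix (Fin d) (Fin d) ℂ) (hg : ∀ m, (∃ i, m i < 0) → g m = 0) :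
    (∑ᶠ m ∈ {m : Fin N → ℤ | (∑ i, Λ i * ((m i : ℤ) : ℝ)) = v}, g m)
      = ∑ m ∈ (aux_fin hN Λ hΛ v).toFinset, g m := by
  apply finsum_mem_eq_sum_of_inter_support_eq
  ext m
  simp only [Set.mem_inter_iff, Set.mem_setOf_eq, Function.mem_support, Finset.coe_sort_coe,
    Set.Finite.coe_toFinset]
  constructor
  · rintro ⟨hm, hne⟩
    refine ⟨⟨hm, fun i => ?_⟩, hne⟩
    by_contra hlt
    exact hne (hg m ⟨i, lt_of_not_ge hlt⟩)
  · rintro ⟨⟨hm, _⟩, hne⟩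
    exact ⟨hm, hne⟩

/-- The aggregated coefficients `Ξ̂_{[n],t} = ∑_{n'≈n} Ξ^{L,A}_{n',t}`
(sums over the class of `n` for the relation `Λ·n = Λ·n'`) satisfy
`Ξ̂_{[n],t} = ∑_{[j]∈J} Â_{[j]}(t) Ξ̂_{[n-e_j], t-L_j}`, where `J` is the quotient of
`{1,…,N}` by `i ∼ j ⟺ Λ_i = Λ_j` and `Â_{[i]}(t) = ∑_{j∼i} A_j(t)`. -/
theorem stmt_6 {N d : ℕ} (Λ L : Fin N → ℝ) (hΛ : ∀ i, 0 < Λ i) (hL : ∀ i, 0 < L i)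
    (hZ : ∀ z : Fin N → ℤ, (∑ i, Λ i * (z i : ℝ)) = 0 → (∑ i, L i * (z i : ℝ)) = 0)
    (A : ℝ → Fin N → Matrix (Fin d) (Fin d) ℂ)
    (Ξ : (Fin N → ℤ) → ℝ → Matrix (Fin d) (Fin d) ℂ)
    (hΞneg : ∀ (n : Fin N → ℤ) (t : ℝ), (∃ i, n i < 0) → Ξ n t = 0)
    (hΞzero : ∀ t : ℝ, Ξ 0 t = 1)
    (hΞrec : ∀ (n : Fin N → ℤ), (∀ i, 0 ≤ n i) → n ≠ 0 → ∀ t : ℝ,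
      Ξ n t = ∑ k, A t k * Ξ (n - Pi.single k 1) (t - L k))
    (n : Fin N → ℕ) (hn : n ≠ 0) (t : ℝ) :
    (∑ᶠ n' ∈ {n' : Fin N → ℤ |
        ∑ i, Λ i * (n' i : ℝ) = ∑ i, Λ i * (n i : ℝ)}, Ξ n' t)
      = ∑ c : Quotient (Setoid.ker Λ),
          (∑ i ∈ univ.filter (fun i => Λ i = Λ (Quotient.out c)), A t i) *
          (∑ᶠ n' ∈ {n' : Fin N → ℤ |
              ∑ i, Λ i * (n' i : ℝ)
                = ∑ i, Λ i * ((((fun i => (n i : ℤ)) - Pi.single (Quotient.out c) 1 : Fin N → ℤ) i : ℤ) : ℝ)},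
            Ξ n' (t - L (Quotient.out c))) := by
  have hN : N ≠ 0 := by rintro rfl; exact hn (funext fun i => i.elim0)
  set v0 : ℝ := ∑ i, Λ i * (n i : ℝ) with hv0
  -- v0 > 0
  have hv0pos : 0 < v0 := by
    obtain ⟨j, hj⟩ : ∃ j, n j ≠ 0 := by
      by_contra h
      push_neg at h
      exact hn (funext fun i => h i)
    have h1 : 0 < Λ j * (n j : ℝ) := by
      apply mul_pos (hΛ j)
      exact_mod_cast Nat.pos_of_ne_zero hj
    calc (0 : ℝ) < Λ j * (n j : ℝ) := h1
      _ ≤ v0 := Finset.single_le_sum (f := fun i => Λ i * (n i : ℝ))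
          (fun i _ => mul_nonneg (hΛ i).le (Nat.cast_nonneg _)) (Finset.mem_univ j)
  -- the finite set of "class representatives"
  set F : ℝ → Finset (Fin N → ℤ) := fun v => (aux_fin hN Λ hΛ v).toFinset with hF
  -- L is equal on Λ-classes
  have hLk : ∀ k k0 : Fin N, Λ k = Λ k0 → L k = L k0 := by
    intro k k0 hkk
    have hz := hZ ((Pi.single k 1 : Fin N → ℤ) - Pi.single k0 1) ?_
    · rw [aux_wsub, aux_wsingle, aux_wsingle] at hz
      linarith
    · rw [aux_wsub, aux_wsingle, aux_wsingle, hkk, sub_self]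
  -- rewrite LHS
  have hg1 : ∀ m : Fin N → ℤ, (∃ i, m i < 0) → Ξ m t = 0 := fun m h => hΞneg m t h
  rw [show {n' : Fin N → ℤ | ∑ i, Λ i * (n' i : ℝ) = ∑ i, Λ i * (n i : ℝ)}
      = {m : Fin N → ℤ | (∑ i, Λ i * ((m i : ℤ) : ℝ)) = v0} from rfl]
  rw [aux_finsum hN Λ hΛ v0 (fun m => Ξ m t) hg1]
  -- apply the recursion on each element of F v0
  have step1 : ∀ m ∈ F v0, Ξ m t = ∑ k, A t k * Ξ (m - Pi.single k 1) (t - L k) := by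
    intro m hm
    rw [hF, Set.Finite.mem_toFinset] at hm
    obtain ⟨hmv, hmpos⟩ := hm
    apply hΞrec m hmpos
    rintro rfl
    simp only [Pi.zero_apply, Int.cast_zero, mul_zero, Finset.sum_const_zero] at hmv
    exact absurd hmv.symm (ne_of_gt hv0pos)
  rw [Finset.sum_congr rfl step1, Finset.sum_comm]
  simp_rw [← Finset.mul_sum]
  -- inner sum reindexing
  have hinner : ∀ (k : Fin N) (t' : ℝ),
      (∑ m ∈ F v0, Ξ (m - Pi.single k 1) t') = ∑ m' ∈ F (v0 - Λ k), Ξ m' t' := by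
    intro k t'
    have hinj : ∀ a ∈ F v0, ∀ b ∈ F v0,
        a - Pi.single k 1 = b - Pi.single k 1 → a = b := by
      intro a _ b _ h
      exact sub_left_injective h
    have himg := Finset.sum_image (s := F v0) (g := fun m => m - Pi.single k 1)
      (f := fun m' => Ξ m' t') hinj
    refine (himg.symm).trans ?_
    symm
    apply Finset.sum_subset
    · -- F (v0 - Λ k) ⊆ image
      intro m' hm'
      rw [hF, Set.Finite.mem_toFinset] at hm'
      obtain ⟨hmv, hmpos⟩ := hm'
      rw [Finset.mem_image]
      refine ⟨m' + Pi.single k 1, ?_, by simp⟩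
      rw [hF, Set.Finite.mem_toFinset]
      constructor
      · have : (m' + Pi.single k 1) - Pi.single k 1 = m' := by simp
        have h2 := aux_wsub Λ (m' + Pi.single k 1) (Pi.single k 1)
        rw [this, aux_wsingle] at h2
        linarith [h2, hmv]
      · intro i
        rcases eq_or_ne i k with rfl | hik
        · simpa using add_nonneg (hmpos i) (by norm_num)
        · simpa [Pi.single_eq_of_ne hik] using hmpos i
    · -- extra terms vanish
      intro m' hm' hnm'
      rw [Finset.mem_image] at hm'
      obtain ⟨m, hm, rfl⟩ := hm'
      rw [hF, Set.Finite.mem_toFinset] at hm hnm'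
      obtain ⟨hmv, hmpos⟩ := hm
      apply hΞneg
      by_contra h
      push_neg at h
      apply hnm'
      constructor
      · rw [aux_wsub, aux_wsingle, hmv]
      · exact h
  simp_rw [hinner]
  -- group indices by Λ-class
  rw [← Finset.sum_fiberwise (Finset.univ : Finset (Fin N))
    (fun k => (Quotient.mk (Setoid.ker Λ) k : Quotient (Setoid.ker Λ)))
    (fun k => A t k * ∑ m' ∈ F (v0 - Λ k), Ξ m' (t - L k))]
  refine Finset.sum_congr rfl fun c _ => ?_
  -- the fiber is the filter by Λ value
  have hfib : (Finset.univ.filter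
        (fun k => (Quotient.mk (Setoid.ker Λ) k : Quotient (Setoid.ker Λ)) = c))
      = Finset.univ.filter (fun i => Λ i = Λ (Quotient.out c)) := by
    ext k
    simp only [Finset.mem_filter, Finset.mem_univ, true_and]
    rw [Quotient.mk_eq_iff_out]
    exact Iff.rfl
  rw [hfib]
  -- each term in the fiber agrees with the representative's term
  have hterm : ∀ k ∈ Finset.univ.filter (fun i => Λ i = Λ (Quotient.out c)),
      A t k * ∑ m' ∈ F (v0 - Λ k), Ξ m' (t - L k)
        = A t k * ∑ m' ∈ F (v0 - Λ (Quotient.out c)), Ξ m' (t - L (Quotient.out c)) := by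
    intro k hk
    rw [Finset.mem_filter] at hk
    rw [hk.2, hLk k (Quotient.out c) hk.2]
  rw [Finset.sum_congr rfl hterm, ← Finset.sum_mul]
  congr 1
  -- rewrite the RHS finsum
  have hveq : (∑ i, Λ i * ((((fun i => (n i : ℤ)) - Pi.single (Quotient.out c) 1 : Fin N → ℤ) i : ℤ) : ℝ))
      = v0 - Λ (Quotient.out c) := by
    rw [aux_wsub, aux_wsingle]
    congr 1
  have hg2 : ∀ m : Fin N → ℤ, (∃ i, m i < 0) → Ξ m (t - L (Quotient.out c)) = 0 :=
    fun m h => hΞneg m _ h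
  symm
  calc (∑ᶠ n' ∈ {n' : Fin N → ℤ |
          ∑ i, Λ i * (n' i : ℝ)
            = ∑ i, Λ i * ((((fun i => (n i : ℤ)) - Pi.single (Quotient.out c) 1 : Fin N → ℤ) i : ℤ) : ℝ)},
        Ξ n' (t - L (Quotient.out c)))
      = ∑ᶠ n' ∈ {n' : Fin N → ℤ |
          (∑ i, Λ i * ((n' i : ℤ) : ℝ)) = v0 - Λ (Quotient.out c)},
        Ξ n' (t - L (Quotient.out c)) := by rw [hveq]
    _ = ∑ m' ∈ F (v0 - Λ (Quotient.out c)), Ξ m' (t - L (Quotient.out c)) :=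
        aux_finsum hN Λ hΛ _ _ hg2
end

section
/- Let L ∈ (ℝ_{>0})^N, A : ℝ → M_d(ℂ)^N, u_0 : [-L_max, 0) → ℂ^d, and u the unique solution of u(t) = Σ_{j=1}^N A_j(t) u(t - L_j) for t ≥ 0 with u = u_0 on [-L_max, 0). Then for every t ≥ 0, u(t) = Σ_{(n,j) ∈ ℕ^N × {1,…,N}, -L_j ≤ t - L·n < 0} Ξ^{L,A}_{n - e_j, t} A_j(t - L·n + L_j) u_0(t - L·n). -/
open Finset

namespace Stmt8Aux

variable {N d : ℕ}

noncomputable def Ls (L : Fin N → ℝ) (n : Fin N → ℕ) : ℝ := ∑ i, L i * (n i : ℝ)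

def S (L : Fin N → ℝ) (t : ℝ) : Set ((Fin N → ℕ) × Fin N) :=
  {p | -(L p.2) ≤ t - Ls L p.1 ∧ t - Ls L p.1 < 0}

theorem Ls_single (L : Fin N → ℝ) (k : Fin N) : Ls L (Pi.single k 1) = L k := by
  simp [Ls, Pi.single_apply, apply_ite, mul_ite]

theorem Ls_add_single (L : Fin N → ℝ) (n : Fin N → ℕ) (k : Fin N) :
    Ls L (n + Pi.single k 1) = Ls L n + L k := by
  have h := Ls_single L k
  simp only [Ls, Pi.add_apply, Nat.cast_add, mul_add, Finset.sum_add_distrib] at *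
  rw [h]

theorem Sfin (hN : 0 < N) (L : Fin N → ℝ) (hL : ∀ i, 0 < L i) (Lmax : ℝ)
    (hLmax : IsGreatest (Set.range L) Lmax) (t : ℝ) : (S L t).Finite := by
  obtain ⟨k₀, -, hk₀⟩ := Finset.exists_min_image Finset.univ L ⟨⟨0, hN⟩, Finset.mem_univ _⟩
  set M := ⌊(t + Lmax) / L k₀⌋₊ with hM
  have : S L t ⊆ (Set.univ.pi fun _ : Fin N => Set.Iic M) ×ˢ (Set.univ : Set (Fin N)) := by
    rintro ⟨n, j⟩ ⟨h1, -⟩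
    have hLj : L j ≤ Lmax := hLmax.2 ⟨j, rfl⟩
    have hsum : Ls L n ≤ t + Lmax := by
      have : -(L j) ≤ t - Ls L n := h1
      linarith
    refine ⟨fun i _ => ?_, trivial⟩
    have h2 : L k₀ * (n i : ℝ) ≤ Ls L n := by
      have : L i * (n i : ℝ) ≤ Ls L n := by
        apply Finset.single_le_sum (f := fun i => L i * (n i : ℝ)) ?_ (Finset.mem_univ i)
        intro m _; exact mul_nonneg (hL m).le (Nat.cast_nonneg _)
      have := mul_le_mul_of_nonneg_right (hk₀ i (Finset.mem_univ i)) (Nat.cast_nonneg (n i))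
      linarith
    have : (n i : ℝ) ≤ (t + Lmax) / L k₀ := by
      rw [le_div_iff₀ (hL k₀)]; linarith
    exact Nat.le_floor this
  exact Set.Finite.subset (Set.Finite.prod (Set.Finite.pi fun _ => Set.finite_Iic M)
    Set.finite_univ) this



theorem sum_mulVec' {m' : Type*} {ι : Type*} [Fintype m'] (s : Finset ι)
    (M : ι → Matrix (Fin d) m' ℂ) (v : m' → ℂ) :
    (∑ i ∈ s, M i).mulVec v = ∑ i ∈ s, (M i).mulVec v := by
  induction s using Finset.cons_induction with
  | empty => simp [Matrix.zero_mulVec]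
  | cons a s ha ih => simp [Finset.sum_cons, Matrix.add_mulVec, ih]

theorem mulVec_sum' {m' : Type*} {ι : Type*} [Fintype m'] (s : Finset ι)
    (M : Matrix (Fin d) m' ℂ) (v : ι → m' → ℂ) :
    M.mulVec (∑ i ∈ s, v i) = ∑ i ∈ s, M.mulVec (v i) := by
  induction s using Finset.cons_induction with
  | empty => simp [Matrix.mulVec_zero]
  | cons a s ha ih => simp [Finset.sum_cons, Matrix.mulVec_add, ih]

theorem cast_single (k : Fin N) :
    (fun i => (((Pi.single k 1 : Fin N → ℕ)) i : ℤ)) = (Pi.single k 1 : Fin N → ℤ) := by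
  funext i
  by_cases h : i = k
  · subst h; simp
  · simp [Pi.single_apply, h]

theorem cast_sub_single (m : Fin N → ℕ) (k : Fin N) (h : 1 ≤ m k) :
    (fun i => ((((m - Pi.single k 1 : Fin N → ℕ)) i : ℕ) : ℤ))
      = (fun i => (m i : ℤ)) - (Pi.single k 1 : Fin N → ℤ) := by
  funext i
  by_cases hik : i = k
  · subst hik
    simp only [Pi.sub_apply, Pi.single_eq_same]
    have : m i - 1 + 1 = m i := Nat.succ_pred_eq_of_pos h
    push_cast [Nat.cast_sub h]
    ring
  · simp [Pi.sub_apply, Pi.single_apply, hik]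

theorem sub_add_single (m : Fin N → ℕ) (k : Fin N) (h : 1 ≤ m k) :
    (m - Pi.single k 1 : Fin N → ℕ) + Pi.single k 1 = m := by
  funext i
  by_cases hik : i = k
  · subst hik
    simp only [Pi.add_apply, Pi.sub_apply, Pi.single_eq_same]
    omega
  · simp [Pi.single_apply, hik]

theorem add_sub_single (m : Fin N → ℕ) (k : Fin N) :
    (m + Pi.single k 1 : Fin N → ℕ) - Pi.single k 1 = m := by
  funext i
  by_cases hik : i = k
  · subst hik; simp only [Pi.sub_apply, Pi.add_apply, Pi.single_eq_same]; omega
  · simp [Pi.single_apply, hik]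

theorem le_Ls (L : Fin N → ℝ) (hL : ∀ i, 0 < L i) (n : Fin N → ℕ) (j : Fin N)
    (h : 1 ≤ n j) : L j ≤ Ls L n := by
  have h1 : L j * 1 ≤ L j * (n j : ℝ) := by
    apply mul_le_mul_of_nonneg_left _ (hL j).le
    exact_mod_cast h
  have h2 : L j * (n j : ℝ) ≤ Ls L n := by
    apply Finset.single_le_sum (f := fun i => L i * (n i : ℝ)) ?_ (Finset.mem_univ j)
    intro m _; exact mul_nonneg (hL m).le (Nat.cast_nonneg _)
  linarith

section Main

variable (hN : 0 < N) (L : Fin N → ℝ) (hL : ∀ i, 0 < L i)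
    (Lmax : ℝ) (hLmax : IsGreatest (Set.range L) Lmax)
    (A : ℝ → Fin N → Matrix (Fin d) (Fin d) ℂ)
    (Ξ : (Fin N → ℤ) → ℝ → Matrix (Fin d) (Fin d) ℂ)
    (u₀ : ℝ → Fin d → ℂ)

noncomputable def trm (t : ℝ) (p : (Fin N → ℕ) × Fin N) : Fin d → ℂ :=
  (Ξ ((fun i => (p.1 i : ℤ)) - Pi.single p.2 1) t *
    A (t - Ls L p.1 + L p.2) p.2).mulVec (u₀ (t - Ls L p.1))

noncomputable def R (t : ℝ) : Fin d → ℂ :=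
  ∑ p ∈ (Sfin hN L hL Lmax hLmax t).toFinset, trm L A Ξ u₀ t p

variable (hΞneg : ∀ (n : Fin N → ℤ) (t : ℝ), (∃ i, n i < 0) → Ξ n t = 0)
    (hΞzero : ∀ t : ℝ, Ξ 0 t = 1)
    (hΞrec : ∀ (n : Fin N → ℤ), (∀ i, 0 ≤ n i) → n ≠ 0 → ∀ t : ℝ,
      Ξ n t = ∑ k, A t k * Ξ (n - Pi.single k 1) (t - L k))

include hΞneg in
theorem trm_zero_of_zero (t : ℝ) (p : (Fin N → ℕ) × Fin N) (h : p.1 p.2 = 0) :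
    trm L A Ξ u₀ t p = 0 := by
  have : Ξ ((fun i => (p.1 i : ℤ)) - Pi.single p.2 1) t = 0 := by
    apply hΞneg
    refine ⟨p.2, ?_⟩
    simp [h]
  rw [trm, this, Matrix.zero_mul, Matrix.zero_mulVec]

include hΞneg in
theorem R_neg (s : ℝ) (hs : s < 0) : R hN L hL Lmax hLmax A Ξ u₀ s = 0 := by
  apply Finset.sum_eq_zero
  intro p hp
  rw [Set.Finite.mem_toFinset] at hp
  obtain ⟨h1, h2⟩ := hp
  by_cases hz : p.1 p.2 = 0
  · exact trm_zero_of_zero L A Ξ u₀ hΞneg s p hz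
  · exfalso
    have h3 : L p.2 ≤ Ls L p.1 := le_Ls L hL p.1 p.2 (Nat.one_le_iff_ne_zero.mpr hz)
    linarith



noncomputable def g (t : ℝ) (k : Fin N) (p : (Fin N → ℕ) × Fin N) : Fin d → ℂ :=
  (Ξ ((fun i => (p.1 i : ℤ)) - Pi.single p.2 1 - Pi.single k 1) (t - L k)
    * A (t - Ls L p.1 + L p.2) p.2).mulVec (u₀ (t - Ls L p.1))

include hΞneg hΞrec in
theorem trm_eq_sum_g (t : ℝ) (p : (Fin N → ℕ) × Fin N) (hpne : p.1 ≠ Pi.single p.2 1) :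
    trm L A Ξ u₀ t p = ∑ k, (A t k).mulVec (g L A Ξ u₀ t k p) := by
  rcases Nat.eq_zero_or_pos (p.1 p.2) with hz | hpos
  · rw [trm_zero_of_zero L A Ξ u₀ hΞneg t p hz]
    symm; apply Finset.sum_eq_zero; intro k _
    have hΞ : Ξ ((fun i => (p.1 i : ℤ)) - Pi.single p.2 1 - Pi.single k 1) (t - L k) = 0 := by
      apply hΞneg
      refine ⟨p.2, ?_⟩
      have he : (0:ℤ) ≤ (Pi.single k 1 : Fin N → ℤ) p.2 := by
        rcases eq_or_ne p.2 k with h | h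
        · subst h; simp
        · simp [Pi.single_apply, h]
      simp only [Pi.sub_apply, Pi.single_eq_same, hz, Nat.cast_zero]
      linarith
    rw [g, hΞ, Matrix.zero_mul, Matrix.zero_mulVec, Matrix.mulVec_zero]
  · have hnn : ∀ i, 0 ≤ (((fun i => (p.1 i : ℤ)) - Pi.single p.2 1 : Fin N → ℤ)) i := by
      intro i
      rcases eq_or_ne i p.2 with h | h
      · simp only [Pi.sub_apply, h, Pi.single_eq_same]
        have : (1:ℤ) ≤ (p.1 p.2 : ℤ) := by exact_mod_cast hpos
        linarith
      · simp only [Pi.sub_apply, Pi.single_apply, if_neg h]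
        have : (0:ℤ) ≤ (p.1 i : ℤ) := Nat.cast_nonneg _
        linarith
    have hne : ((fun i => (p.1 i : ℤ)) - Pi.single p.2 1) ≠ 0 := by
      intro h
      apply hpne
      funext i
      have hi := congrFun h i
      simp only [Pi.sub_apply, Pi.zero_apply, sub_eq_zero] at hi
      rcases eq_or_ne i p.2 with h' | h'
      · subst h'; simp only [Pi.single_eq_same] at hi ⊢; exact_mod_cast hi
      · simp only [Pi.single_apply, if_neg h'] at hi ⊢; exact_mod_cast hi
    rw [trm, hΞrec _ hnn hne t, Finset.sum_mul, sum_mulVec']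
    apply Finset.sum_congr rfl
    intro k _
    rw [g, Matrix.mulVec_mulVec, ← Matrix.mul_assoc]


include hΞneg in
theorem sum_g_eq_R (t : ℝ) (k : Fin N) :
    ∑ p ∈ ((Sfin hN L hL Lmax hLmax t).toFinset.filter
        (fun p => ¬ p.1 = Pi.single p.2 1)), g L A Ξ u₀ t k p
      = R hN L hL Lmax hLmax A Ξ u₀ (t - L k) := by
  classical
  set F₂ := (Sfin hN L hL Lmax hLmax t).toFinset.filter
      (fun p => ¬ p.1 = Pi.single p.2 1) with hF₂def
  have e1 : ∑ p ∈ F₂.filter (fun p => 1 ≤ p.1 k ∧ p.1 ≠ Pi.single k 1),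
      g L A Ξ u₀ t k p = ∑ p ∈ F₂, g L A Ξ u₀ t k p := by
    apply Finset.sum_filter_of_ne
    intro p hp hgne
    obtain ⟨hpF, hpne⟩ := Finset.mem_filter.mp hp
    constructor
    · by_contra h1
      have hz : p.1 k = 0 := by omega
      apply hgne
      have hΞ : Ξ ((fun i => (p.1 i : ℤ)) - Pi.single p.2 1 - Pi.single k 1) (t - L k) = 0 := by
        apply hΞneg
        refine ⟨k, ?_⟩
        have he : (0:ℤ) ≤ (Pi.single p.2 1 : Fin N → ℤ) k := by
          rcases eq_or_ne k p.2 with h | h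
          · subst h; simp
          · simp [Pi.single_apply, h]
        simp only [Pi.sub_apply, Pi.single_eq_same, hz, Nat.cast_zero]
        linarith
      rw [g, hΞ, Matrix.zero_mul, Matrix.zero_mulVec]
    · intro heq
      apply hgne
      have hp2k : p.2 ≠ k := by
        intro h; apply hpne; rw [heq, h]
      have hΞ : Ξ ((fun i => (p.1 i : ℤ)) - Pi.single p.2 1 - Pi.single k 1) (t - L k) = 0 := by
        apply hΞneg
        refine ⟨p.2, ?_⟩
        have h1 : ((p.1 p.2 : ℤ)) = 0 := by
          rw [heq]; simp [Pi.single_apply, hp2k]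
        have h2 : (Pi.single k 1 : Fin N → ℤ) p.2 = 0 := by
          simp [Pi.single_apply, hp2k]
        simp only [Pi.sub_apply, Pi.single_eq_same, h1, h2]
        norm_num
      rw [g, hΞ, Matrix.zero_mul, Matrix.zero_mulVec]
  have e2 : ∑ q ∈ (Sfin hN L hL Lmax hLmax (t - L k)).toFinset.filter
      (fun q => q.1 ≠ 0), trm L A Ξ u₀ (t - L k) q
      = ∑ q ∈ (Sfin hN L hL Lmax hLmax (t - L k)).toFinset, trm L A Ξ u₀ (t - L k) q := by
    apply Finset.sum_filter_of_ne
    intro q hq hne h0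
    apply hne
    apply trm_zero_of_zero L A Ξ u₀ hΞneg
    rw [h0]; rfl
  rw [R, ← e1, ← e2]
  refine Finset.sum_bij' (fun p _ => ((p.1 - Pi.single k 1 : Fin N → ℕ), p.2))
    (fun q _ => ((q.1 + Pi.single k 1 : Fin N → ℕ), q.2)) ?hi ?hj ?li ?ri ?h
  case hi =>
    intro p hp
    rw [Finset.mem_filter] at hp
    obtain ⟨hpF₂, h1k, hne2⟩ := hp
    rw [hF₂def, Finset.mem_filter, Set.Finite.mem_toFinset] at hpF₂
    obtain ⟨⟨hc1, hc2⟩, hpne⟩ := hpF₂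
    have hLs' : Ls L (p.1 - Pi.single k 1) = Ls L p.1 - L k := by
      have h := Ls_add_single L (p.1 - Pi.single k 1) k
      rw [sub_add_single p.1 k h1k] at h
      linarith
    rw [Finset.mem_filter, Set.Finite.mem_toFinset]
    refine ⟨⟨?_, ?_⟩, ?_⟩
    · show -(L p.2) ≤ t - L k - Ls L (p.1 - Pi.single k 1)
      rw [hLs']; linarith
    · show t - L k - Ls L (p.1 - Pi.single k 1) < 0
      rw [hLs']; linarith
    · intro h0
      dsimp only at h0
      apply hne2
      have h := sub_add_single p.1 k h1k
      rw [h0, zero_add] at h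
      exact h.symm
  case hj =>
    intro q hq
    rw [Finset.mem_filter, Set.Finite.mem_toFinset] at hq
    obtain ⟨⟨hc1, hc2⟩, hq0⟩ := hq
    have hLs' : Ls L (q.1 + Pi.single k 1) = Ls L q.1 + L k := Ls_add_single L q.1 k
    rw [Finset.mem_filter, hF₂def, Finset.mem_filter, Set.Finite.mem_toFinset]
    refine ⟨⟨⟨?_, ?_⟩, ?_⟩, ?_, ?_⟩
    · show -(L q.2) ≤ t - Ls L (q.1 + Pi.single k 1)
      rw [hLs']; linarith
    · show t - Ls L (q.1 + Pi.single k 1) < 0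
      rw [hLs']; linarith
    · -- q.1 + single k 1 ≠ single q.2 1
      intro h
      have hk := congrFun h k
      simp only [Pi.add_apply, Pi.single_eq_same, Pi.single_apply] at hk
      by_cases hqk : k = q.2
      · subst hqk
        apply hq0
        funext i
        have hi := congrFun h i
        simp only [Pi.add_apply] at hi
        have : q.1 i = 0 := by omega
        simp [this]
      · rw [if_neg hqk] at hk; omega
    · show 1 ≤ q.1 k + (Pi.single k 1 : Fin N → ℕ) k
      simp
    · intro h
      dsimp only at h
      apply hq0
      have : q.1 + Pi.single k 1 = 0 + Pi.single k 1 := by rw [h, zero_add]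
      exact add_right_cancel this
  case li =>
    intro p hp
    dsimp only
    rw [Finset.mem_filter] at hp
    obtain ⟨-, h1k, -⟩ := hp
    exact Prod.ext (sub_add_single p.1 k h1k) rfl
  case ri =>
    intro q hq
    dsimp only
    exact Prod.ext (add_sub_single q.1 k) rfl
  case h =>
    intro p hp
    rw [Finset.mem_filter] at hp
    obtain ⟨hpF₂, h1k, -⟩ := hp
    have hLs' : Ls L (p.1 - Pi.single k 1) = Ls L p.1 - L k := by
      have h := Ls_add_single L (p.1 - Pi.single k 1) k
      rw [sub_add_single p.1 k h1k] at h
      linarith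
    rw [g, trm]
    simp only [cast_sub_single p.1 k h1k, hLs']
    have e3 : t - L k - (Ls L p.1 - L k) = t - Ls L p.1 := by ring
    rw [e3, sub_right_comm]

include hΞneg hΞzero hΞrec in
theorem step (t : ℝ) (ht : 0 ≤ t) :
    R hN L hL Lmax hLmax A Ξ u₀ t =
      (∑ j ∈ Finset.univ.filter (fun j => t < L j), (A t j).mulVec (u₀ (t - L j))) +
      ∑ k, (A t k).mulVec (R hN L hL Lmax hLmax A Ξ u₀ (t - L k)) := by
  classical
  rw [R, ← Finset.sum_filter_add_sum_filter_not ((Sfin hN L hL Lmax hLmax t).toFinset)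
    (fun p => p.1 = Pi.single p.2 1)]
  congr 1
  · refine Finset.sum_bij' (fun p _ => p.2) (fun j _ => ((Pi.single j 1 : Fin N → ℕ), j))
      ?hi ?hj ?li ?ri ?h
    case hi =>
      intro p hp
      rw [Finset.mem_filter, Set.Finite.mem_toFinset] at hp
      obtain ⟨⟨h1, h2⟩, heq⟩ := hp
      rw [heq, Ls_single] at h2
      simp only [Finset.mem_filter, Finset.mem_univ, true_and]
      linarith
    case hj =>
      intro j hj
      rw [Finset.mem_filter] at hj
      obtain ⟨-, hj⟩ := hj
      rw [Finset.mem_filter, Set.Finite.mem_toFinset]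
      refine ⟨⟨?_, ?_⟩, rfl⟩
      · show -(L j) ≤ t - Ls L (Pi.single j 1)
        rw [Ls_single]; linarith
      · show t - Ls L (Pi.single j 1) < 0
        rw [Ls_single]; linarith
    case li =>
      intro p hp
      rw [Finset.mem_filter] at hp
      exact Prod.ext hp.2.symm rfl
    case ri => intro j hj; rfl
    case h =>
      intro p hp
      rw [Finset.mem_filter, Set.Finite.mem_toFinset] at hp
      obtain ⟨-, heq⟩ := hp
      rw [trm, heq]
      simp only [cast_single, sub_self, hΞzero, Matrix.one_mul, Ls_single]
      have e : t - L p.2 + L p.2 = t := by ring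
      rw [e]
  · rw [Finset.sum_congr rfl (fun p hp => trm_eq_sum_g L A Ξ u₀ hΞneg hΞrec t p
        (Finset.mem_filter.mp hp).2), Finset.sum_comm]
    apply Finset.sum_congr rfl
    intro k _
    rw [← mulVec_sum', sum_g_eq_R hN L hL Lmax hLmax A Ξ u₀ hΞneg t k]

end Main

end Stmt8Aux


open Stmt8Aux in
/-- Representation formula for the solution of the difference equation
`u(t) = ∑_j A_j(t) u(t-L_j)`: for `t ≥ 0`,
`u(t) = ∑_{(n,j) : -L_j ≤ t - L·n < 0} Ξ_{n-e_j,t} A_j(t - L·n + L_j) u₀(t - L·n)`. -/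
theorem stmt_8 {N d : ℕ} (hN : 0 < N) (L : Fin N → ℝ) (hL : ∀ i, 0 < L i)
    (Lmax : ℝ) (hLmax : IsGreatest (Set.range L) Lmax)
    (A : ℝ → Fin N → Matrix (Fin d) (Fin d) ℂ)
    (Ξ : (Fin N → ℤ) → ℝ → Matrix (Fin d) (Fin d) ℂ)
    (hΞneg : ∀ (n : Fin N → ℤ) (t : ℝ), (∃ i, n i < 0) → Ξ n t = 0)
    (hΞzero : ∀ t : ℝ, Ξ 0 t = 1)
    (hΞrec : ∀ (n : Fin N → ℤ), (∀ i, 0 ≤ n i) → n ≠ 0 → ∀ t : ℝ,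
      Ξ n t = ∑ k, A t k * Ξ (n - Pi.single k 1) (t - L k))
    (u₀ : ℝ → Fin d → ℂ) (u : ℝ → Fin d → ℂ)
    (hu₀ : ∀ t, -Lmax ≤ t → t < 0 → u t = u₀ t)
    (hu : ∀ t, 0 ≤ t → u t = ∑ j, (A t j).mulVec (u (t - L j))) :
    ∀ t, 0 ≤ t →
      u t = ∑ᶠ p ∈ {p : (Fin N → ℕ) × Fin N |
          -(L p.2) ≤ t - ∑ i, L i * (p.1 i : ℝ) ∧ t - ∑ i, L i * (p.1 i : ℝ) < 0},
        (Ξ ((fun i => (p.1 i : ℤ)) - Pi.single p.2 1) t *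
          A (t - (∑ i, L i * (p.1 i : ℝ)) + L p.2) p.2).mulVec
          (u₀ (t - ∑ i, L i * (p.1 i : ℝ))) := by
  classical
  obtain ⟨k₀, -, hk₀⟩ := Finset.exists_min_image Finset.univ L ⟨⟨0, hN⟩, Finset.mem_univ _⟩
  have key : ∀ n : ℕ, ∀ t : ℝ, 0 ≤ t → t < n * L k₀ →
      u t = R hN L hL Lmax hLmax A Ξ u₀ t := by
    intro n
    induction n with
    | zero =>
      intro t ht ht'
      exfalso
      simp only [Nat.cast_zero, zero_mul] at ht'
      linarith
    | succ n ih =>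
      intro t ht ht'
      rw [hu t ht, step hN L hL Lmax hLmax A Ξ u₀ hΞneg hΞzero hΞrec t ht]
      rw [← Finset.sum_filter_add_sum_filter_not Finset.univ (fun j => t < L j)]
      congr 1
      · apply Finset.sum_congr rfl
        intro j hj
        rw [Finset.mem_filter] at hj
        have hjLmax : L j ≤ Lmax := hLmax.2 ⟨j, rfl⟩
        rw [hu₀ (t - L j) (by linarith) (by linarith [hj.2])]
      · rw [← Finset.sum_filter_add_sum_filter_not Finset.univ (fun j => t < L j)
            (fun k => (A t k).mulVec (R hN L hL Lmax hLmax A Ξ u₀ (t - L k)))]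
        have hz : ∑ j ∈ Finset.univ.filter (fun j => t < L j),
            (A t j).mulVec (R hN L hL Lmax hLmax A Ξ u₀ (t - L j)) = 0 := by
          apply Finset.sum_eq_zero
          intro j hj
          rw [Finset.mem_filter] at hj
          rw [R_neg hN L hL Lmax hLmax A Ξ u₀ hΞneg (t - L j) (by linarith [hj.2]),
            Matrix.mulVec_zero]
        rw [hz, zero_add]
        apply Finset.sum_congr rfl
        intro j hj
        rw [Finset.mem_filter] at hj
        have hj' : L j ≤ t := by
          have := hj.2
          push_neg at this
          exact this
        have hk₀j : L k₀ ≤ L j := hk₀ j (Finset.mem_univ j)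
        have hcast : ((n+1 : ℕ) : ℝ) * L k₀ = n * L k₀ + L k₀ := by push_cast; ring
        rw [hcast] at ht'
        rw [ih (t - L j) (by linarith) (by linarith)]
  intro t ht
  obtain ⟨n, hn⟩ := exists_nat_gt (t / L k₀)
  have htn : t < n * L k₀ := by
    rw [div_lt_iff₀ (hL k₀)] at hn
    linarith
  rw [key n t ht htn]
  have hset : {p : (Fin N → ℕ) × Fin N |
      -(L p.2) ≤ t - ∑ i, L i * (p.1 i : ℝ) ∧ t - ∑ i, L i * (p.1 i : ℝ) < 0}
      = ↑((Sfin hN L hL Lmax hLmax t).toFinset) := by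
    rw [Set.Finite.coe_toFinset]
    rfl
  rw [hset, finsum_mem_coe_finset]
  rfl
end

section
/- Let Λ ∈ (ℝ_{>0})^N, Z(Λ) = {z ∈ ℤ^N | Λ·z = 0}, and m_0 = sup({1} ∪ {|z_+|_1/|z_-|_1 : z ∈ Z(Λ) \ {0}}). If n, n_0 ∈ ℕ^N satisfy Λ·n = Λ·n_0, then (1/m_0)|n_0|_1 ≤ |n|_1 ≤ m_0 |n_0|_1. -/
open Finset

lemma aux_stmt11 {N : ℕ} (Λ : Fin N → ℝ) (hΛ : ∀ i, 0 < Λ i) (z : Fin N → ℤ)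
    (hz : (∑ i, Λ i * (z i : ℝ)) = 0) (hz0 : z ≠ 0) :
    0 < ((∑ i, max (-z i) 0 : ℤ) : ℝ) ∧
    ((∑ i, max (z i) 0 : ℤ) : ℝ) ≤
      ((∑ i, Λ i) * ∑ i, (Λ i)⁻¹) * ((∑ i, max (-z i) 0 : ℤ) : ℝ) := by
  -- P = Q
  have hPQ : (∑ i, Λ i * ((max (z i) 0 : ℤ) : ℝ)) = ∑ i, Λ i * ((max (-z i) 0 : ℤ) : ℝ) := by
    rw [← sub_eq_zero, ← Finset.sum_sub_distrib, ← hz]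
    apply Finset.sum_congr rfl
    intro i _
    have h' : ((max (z i) 0 : ℤ) : ℝ) - ((max (-z i) 0 : ℤ) : ℝ) = ((z i : ℤ) : ℝ) := by
      have h'' : (max (z i) 0) - (max (-z i) 0) = z i := by omega
      exact_mod_cast congrArg (Int.cast : ℤ → ℝ) h''
    rw [← mul_sub, h']
  have hBpos : 0 < ((∑ i, max (-z i) 0 : ℤ) : ℝ) := by
    by_contra h
    push_neg at h
    have h0 : (∑ i, max (-z i) 0 : ℤ) = 0 := by
      have : (0:ℤ) ≤ ∑ i, max (-z i) 0 := Finset.sum_nonneg (fun i _ => le_max_right _ _)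
      exact_mod_cast le_antisymm (by exact_mod_cast h) this
    have hall : ∀ i ∈ Finset.univ, max (-z i) 0 = 0 :=
      (Finset.sum_eq_zero_iff_of_nonneg (fun i _ => le_max_right _ _)).mp h0
    have hpos : ∀ i, (0:ℤ) ≤ z i := by
      intro i; have := hall i (Finset.mem_univ i); omega
    -- all terms of hz nonneg, sum 0 → each zero
    have : ∀ i ∈ Finset.univ, Λ i * ((z i : ℤ) : ℝ) = 0 := by
      refine (Finset.sum_eq_zero_iff_of_nonneg ?_).mp hz
      intro i _
      exact mul_nonneg (hΛ i).le (by exact_mod_cast hpos i)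
    apply hz0
    funext i
    have := this i (Finset.mem_univ i)
    have hzi : ((z i : ℤ) : ℝ) = 0 := by
      rcases mul_eq_zero.mp this with h' | h'
      · exact absurd h' (hΛ i).ne'
      · exact h'
    exact_mod_cast hzi
  refine ⟨hBpos, ?_⟩
  set B : ℝ := ((∑ i, max (-z i) 0 : ℤ) : ℝ) with hB
  set P : ℝ := ∑ i, Λ i * ((max (z i) 0 : ℤ) : ℝ) with hP
  have h1 : ((∑ i, max (z i) 0 : ℤ) : ℝ) ≤ (∑ i, (Λ i)⁻¹) * P := by
    have : ((∑ i, max (z i) 0 : ℤ) : ℝ) = ∑ i, ((max (z i) 0 : ℤ) : ℝ) := by push_cast; rfl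
    rw [this, Finset.sum_mul]
    apply Finset.sum_le_sum
    intro i _
    have hterm : Λ i * ((max (z i) 0 : ℤ) : ℝ) ≤ P := by
      apply Finset.single_le_sum (f := fun j => Λ j * ((max (z j) 0 : ℤ) : ℝ)) ?_ (Finset.mem_univ i)
      intro j _
      exact mul_nonneg (hΛ j).le (by exact_mod_cast le_max_right (z j) 0)
    calc ((max (z i) 0 : ℤ) : ℝ) = (Λ i)⁻¹ * (Λ i * ((max (z i) 0 : ℤ) : ℝ)) :=
            (inv_mul_cancel_left₀ (hΛ i).ne' _).symm
      _ ≤ (Λ i)⁻¹ * P := by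
            apply mul_le_mul_of_nonneg_left hterm (inv_nonneg.mpr (hΛ i).le)
  have h2 : P ≤ (∑ i, Λ i) * B := by
    rw [hPQ, Finset.sum_mul]
    apply Finset.sum_le_sum
    intro i _
    apply mul_le_mul_of_nonneg_left ?_ (hΛ i).le
    rw [hB]
    have : (max (-z i) 0 : ℤ) ≤ ∑ j, max (-z j) 0 :=
      Finset.single_le_sum (f := fun j => max (-z j) 0) (fun j _ => le_max_right _ _) (Finset.mem_univ i)
    exact_mod_cast this
  calc ((∑ i, max (z i) 0 : ℤ) : ℝ) ≤ (∑ i, (Λ i)⁻¹) * P := h1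
    _ ≤ (∑ i, (Λ i)⁻¹) * ((∑ i, Λ i) * B) := by
        apply mul_le_mul_of_nonneg_left h2
        exact Finset.sum_nonneg (fun i _ => inv_nonneg.mpr (hΛ i).le)
    _ = ((∑ i, Λ i) * ∑ i, (Λ i)⁻¹) * B := by ring


/-- With `m₀ = sup({1} ∪ {|z₊|₁/|z₋|₁ : z ∈ Z(Λ) \ {0}})`, any
`n, n₀ ∈ ℕ^N` with `Λ·n = Λ·n₀` satisfy `(1/m₀)|n₀|₁ ≤ |n|₁ ≤ m₀|n₀|₁`. -/
theorem stmt_11 {N : ℕ} (Λ : Fin N → ℝ) (hΛ : ∀ i, 0 < Λ i)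
    (m₀ : ℝ)
    (hm₀ : m₀ = sSup ({1} ∪ {x : ℝ | ∃ z : Fin N → ℤ,
      (∑ i, Λ i * (z i : ℝ)) = 0 ∧ z ≠ 0 ∧
      x = ((∑ i, max (z i) 0 : ℤ) : ℝ) / ((∑ i, max (-z i) 0 : ℤ) : ℝ)}))
    (n n₀ : Fin N → ℕ)
    (hval : (∑ i, Λ i * (n i : ℝ)) = ∑ i, Λ i * (n₀ i : ℝ)) :
    (1 / m₀) * (∑ i, (n₀ i : ℝ)) ≤ (∑ i, (n i : ℝ)) ∧
      (∑ i, (n i : ℝ)) ≤ m₀ * ∑ i, (n₀ i : ℝ) := by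
  set S : Set ℝ := {1} ∪ {x : ℝ | ∃ z : Fin N → ℤ,
      (∑ i, Λ i * (z i : ℝ)) = 0 ∧ z ≠ 0 ∧
      x = ((∑ i, max (z i) 0 : ℤ) : ℝ) / ((∑ i, max (-z i) 0 : ℤ) : ℝ)} with hS
  set C : ℝ := (∑ i, Λ i) * ∑ i, (Λ i)⁻¹ with hC
  have hbdd : BddAbove S := by
    refine ⟨max 1 C, ?_⟩
    rintro x (hx | ⟨z, hz, hz0, rfl⟩)
    · simp at hx; simp [hx]
    · obtain ⟨hBpos, hle⟩ := aux_stmt11 Λ hΛ z hz hz0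
      refine le_trans ?_ (le_max_right 1 C)
      rw [div_le_iff₀ hBpos]
      exact hle
  have hm1 : 1 ≤ m₀ := hm₀ ▸ le_csSup hbdd (Or.inl rfl)
  have hm0 : 0 < m₀ := lt_of_lt_of_le one_pos hm1
  have hn0nonneg : (0:ℝ) ≤ ∑ i, (n₀ i : ℝ) := Finset.sum_nonneg fun i _ => Nat.cast_nonneg _
  have hnnonneg : (0:ℝ) ≤ ∑ i, (n i : ℝ) := Finset.sum_nonneg fun i _ => Nat.cast_nonneg _
  set z : Fin N → ℤ := fun i => (n i : ℤ) - (n₀ i : ℤ) with hzdef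
  have hzsum : (∑ i, Λ i * (z i : ℝ)) = 0 := by
    have : (∑ i, Λ i * (z i : ℝ)) = (∑ i, Λ i * (n i : ℝ)) - ∑ i, Λ i * (n₀ i : ℝ) := by
      rw [← Finset.sum_sub_distrib]
      apply Finset.sum_congr rfl
      intro i _
      push_cast [hzdef]
      ring
    rw [this, hval, sub_self]
  by_cases hz0 : z = 0
  · have heq : (∑ i, (n i : ℝ)) = ∑ i, (n₀ i : ℝ) := by
      apply Finset.sum_congr rfl
      intro i _
      have h1 : (n i : ℤ) - (n₀ i : ℤ) = 0 := by
        have : z i = 0 := by rw [hz0]; rfl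
        exact this
      have : (n i : ℤ) = (n₀ i : ℤ) := by omega
      exact_mod_cast congrArg (Int.cast : ℤ → ℝ) this
    constructor
    · rw [heq]
      calc (1/m₀) * (∑ i, (n₀ i : ℝ)) ≤ 1 * (∑ i, (n₀ i : ℝ)) := by
            apply mul_le_mul_of_nonneg_right _ hn0nonneg
            rw [div_le_one hm0]; exact hm1
        _ = ∑ i, (n₀ i : ℝ) := one_mul _
    · rw [heq]
      nlinarith
  · set A : ℝ := ((∑ i, max (z i) 0 : ℤ) : ℝ) with hA
    set B : ℝ := ((∑ i, max (-z i) 0 : ℤ) : ℝ) with hB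
    obtain ⟨hBpos, _⟩ := aux_stmt11 Λ hΛ z hzsum hz0
    have hnegsum : (∑ i, Λ i * ((-z) i : ℝ)) = 0 := by
      rw [← neg_eq_zero, ← Finset.sum_neg_distrib, ← hzsum]
      apply Finset.sum_congr rfl
      intro i _
      simp only [Pi.neg_apply]
      push_cast
      ring
    have hneg0 : (-z) ≠ 0 := fun h => hz0 (by simpa using congrArg Neg.neg h)
    have hApos : 0 < A := by
      have := (aux_stmt11 Λ hΛ (-z) hnegsum hneg0).1
      simpa [hA] using this
    have hABmem : A / B ∈ S := Or.inr ⟨z, hzsum, hz0, rfl⟩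
    have hBAmem : B / A ∈ S := by
      refine Or.inr ⟨-z, hnegsum, hneg0, ?_⟩
      simp [hA, hB]
    have hAB : A ≤ m₀ * B := by
      have := le_csSup hbdd hABmem
      rw [← hm₀] at this
      rw [div_le_iff₀ hBpos] at this
      linarith [this]
    have hBA : B ≤ m₀ * A := by
      have := le_csSup hbdd hBAmem
      rw [← hm₀] at this
      rw [div_le_iff₀ hApos] at this
      linarith [this]
    have hsum : (∑ i, (n i : ℝ)) - (∑ i, (n₀ i : ℝ)) = A - B := by
      have hint : (∑ i, max (z i) 0) - (∑ i, max (-z i) 0)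
          = (∑ i, (n i : ℤ)) - ∑ i, (n₀ i : ℤ) := by
        rw [← Finset.sum_sub_distrib, ← Finset.sum_sub_distrib]
        apply Finset.sum_congr rfl
        intro i _
        have hzi : z i = (n i : ℤ) - (n₀ i : ℤ) := rfl
        omega
      have := congrArg (Int.cast : ℤ → ℝ) hint
      push_cast at this
      rw [hA, hB]
      push_cast
      linarith [this]
    have hAn : A ≤ ∑ i, (n i : ℝ) := by
      have hint : (∑ i, max (z i) 0) ≤ ∑ i, (n i : ℤ) := by
        apply Finset.sum_le_sum
        intro i _
        have hzi : z i = (n i : ℤ) - (n₀ i : ℤ) := rfl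
        omega
      rw [hA]
      exact_mod_cast hint
    have hBn₀ : B ≤ ∑ i, (n₀ i : ℝ) := by
      have hint : (∑ i, max (-z i) 0) ≤ ∑ i, (n₀ i : ℤ) := by
        apply Finset.sum_le_sum
        intro i _
        have hzi : z i = (n i : ℤ) - (n₀ i : ℤ) := rfl
        omega
      rw [hB]
      exact_mod_cast hint
    constructor
    · rw [div_mul_eq_mul_div, one_mul, div_le_iff₀ hm0]
      nlinarith [hBA, hAn, hsum, hm1]
    · nlinarith [hAB, hBn₀, hsum, hm1]
end

section
/- Let B ∈ M_{N,h}(ℤ) with rank h, M ∈ M_h(ℝ) invertible, Λ = BMe_1 with Λ ∈ (ℝ_{>0})^N, and n, n_0 ∈ ℕ^N. If Λ·n ≠ Λ·n_0, then (1/(2R)^h) ∫_{[-R,R]^h} e^{i(n-n_0)·BMν} dν → 0 as R → ∞; if Λ·n = Λ·n_0 and in addition n - n_0 ∈ Z(Λ) is orthogonal to range(B), then this average equals 1 for every R > 0. -/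
open Finset MeasureTheory Filter

/-!
The phase is linear in `ν`: `(n - n₀) · BMν = c · ν` with `c = (n - n₀)ᵀBM`. By Fubini the
normalized integral over the cube `[-R,R]^h` is the product of the one-dimensional averages of
`t ↦ e^{i c_j t}` over `[-R,R]`, each of modulus at most `1`. The first coordinate is
`c₁ = Λ·(n - n₀)`; when it is nonzero its average is `O(1/(|c₁| R))`, which kills the product.
When `n - n₀` is orthogonal to the range of `B`, `c = 0` and every factor equals `1`.
-/

section Fubini

variable {ι : Type*} [Fintype ι] {E : ι → Type*} {mE : ∀ i, MeasurableSpace (E i)}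
  {μ : ∀ i, Measure (E i)} [∀ i, SigmaFinite (μ i)] {𝕜 : Type*} [RCLike 𝕜]

theorem setIntegral_univ_pi_prod_eq_prod (s : ∀ i, Set (E i)) (f : ∀ i, E i → 𝕜) :
    ∫ x in Set.univ.pi s, ∏ i, f i (x i) ∂Measure.pi μ = ∏ i, ∫ x in s i, f i x ∂μ i := by
  rw [Measure.restrict_pi_pi]
  exact integral_fintype_prod_eq_prod f

theorem setAverage_univ_pi_prod_eq_prod (s : ∀ i, Set (E i)) (f : ∀ i, E i → 𝕜) :
    ⨍ x in Set.univ.pi s, ∏ i, f i (x i) ∂Measure.pi μ = ∏ i, ⨍ x in s i, f i x ∂μ i := by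
  simp only [setAverage_eq, measureReal_def, Measure.pi_pi, ENNReal.toReal_prod,
    ← prod_inv_distrib, RCLike.ofReal_prod, setIntegral_univ_pi_prod_eq_prod,
    RCLike.real_smul_eq_coe_mul, prod_mul_distrib]

end Fubini

theorem exp_I_mul_dotProduct {ι : Type*} [Fintype ι] (c ν : ι → ℝ) :
    Complex.exp (Complex.I * ↑(c ⬝ᵥ ν)) = ∏ j, Complex.exp (Complex.I * ↑(c j * ν j)) := by
  simp only [dotProduct, Complex.ofReal_sum, mul_sum, Complex.exp_sum]

theorem norm_intervalIntegral_exp_I_mul_le {c : ℝ} (hc : c ≠ 0) (a b : ℝ) :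
    ‖∫ t in a..b, Complex.exp (Complex.I * ↑(c * t))‖ ≤ 2 / |c| := by
  have hIc : Complex.I * c ≠ 0 := by simp [hc]
  simp only [Complex.ofReal_mul, ← mul_assoc]
  rw [integral_exp_mul_complex hIc, norm_div, norm_mul, Complex.norm_I, one_mul,
    Complex.norm_real, Real.norm_eq_abs]
  gcongr
  calc _ ≤ ‖Complex.exp (Complex.I * ↑(c * b))‖ + ‖Complex.exp (Complex.I * ↑(c * a))‖ := by
        push_cast [← mul_assoc]; exact norm_sub_le _ _
    _ = 2 := by rw [Complex.norm_exp_I_mul_ofReal, Complex.norm_exp_I_mul_ofReal]; norm_num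

theorem norm_setAverage_le_of_norm_le_const {α E : Type*} [MeasurableSpace α]
    [NormedAddCommGroup E] [NormedSpace ℝ E] {μ : Measure α} {s : Set α} {f : α → E} {C : ℝ}
    (hs : μ s < ⊤) (hC : ∀ x ∈ s, ‖f x‖ ≤ C) (hC₀ : 0 ≤ C) : ‖⨍ x in s, f x ∂μ‖ ≤ C := by
  rw [setAverage_eq, norm_smul, norm_inv, Real.norm_of_nonneg measureReal_nonneg]
  rcases eq_or_ne (μ.real s) 0 with hs₀ | hs₀
  · simpa [hs₀] using hC₀
  calc (μ.real s)⁻¹ * ‖∫ x in s, f x ∂μ‖ ≤ (μ.real s)⁻¹ * (C * μ.real s) := by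
        gcongr; exact norm_setIntegral_le_of_norm_le_const hs hC
    _ = C := by field_simp

theorem tendsto_setAverage_Icc_exp_I_mul {c : ℝ} (hc : c ≠ 0) :
    Tendsto (fun R : ℝ => ⨍ t in Set.Icc (-R) R, Complex.exp (Complex.I * ↑(c * t))) atTop
      (nhds 0) := by
  have hbound : Tendsto (fun R : ℝ => (2 * R)⁻¹ * (2 / |c|)) atTop (nhds 0) := by
    simpa using ((tendsto_id.const_mul_atTop two_pos).inv_tendsto_atTop).mul_const (2 / |c|)
  refine squeeze_zero_norm' ?_ hbound
  filter_upwards [eventually_gt_atTop 0] with R hR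
  rw [setAverage_eq, norm_smul, norm_inv, Real.volume_real_Icc_of_le (by linarith),
    integral_Icc_eq_integral_Ioc, ← intervalIntegral.integral_of_le (by linarith),
    sub_neg_eq_add, ← two_mul, Real.norm_of_nonneg (by positivity)]
  gcongr
  exact norm_intervalIntegral_exp_I_mul_le hc _ _

theorem norm_setAverage_Icc_exp_I_mul_le_one (c R : ℝ) :
    ‖⨍ t in Set.Icc (-R) R, Complex.exp (Complex.I * ↑(c * t))‖ ≤ 1 :=
  norm_setAverage_le_of_norm_le_const measure_Icc_lt_top
    (fun _ _ => (Complex.norm_exp_I_mul_ofReal _).le) zero_le_one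

theorem setAverage_Icc_exp_I_mul_zero {R : ℝ} (hR : 0 < R) :
    ⨍ t in Set.Icc (-R) R, Complex.exp (Complex.I * ↑(0 * t)) = 1 := by
  simp only [zero_mul, Complex.ofReal_zero, mul_zero, Complex.exp_zero]
  exact setAverage_const (by simp [hR]) measure_Icc_lt_top.ne 1

theorem tendsto_prod_nhds_zero_of_norm_le_one {ι α 𝕜 : Type*} [Fintype ι] [NormedField 𝕜]
    {l : Filter α} {f : ι → α → 𝕜} (hf : ∀ j x, ‖f j x‖ ≤ 1) {i₀ : ι}
    (hi₀ : Tendsto (f i₀) l (nhds 0)) : Tendsto (fun x => ∏ j, f j x) l (nhds 0) := by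
  classical
  refine squeeze_zero_norm (fun x => ?_) (tendsto_zero_iff_norm_tendsto_zero.mp hi₀)
  rw [norm_prod, ← mul_prod_erase univ _ (mem_univ i₀)]
  exact mul_le_of_le_one_right (norm_nonneg _)
    (prod_le_one (fun _ _ => norm_nonneg _) fun j _ => hf j x)

theorem normalized_integral_cube_exp_I_mul_dotProduct {ι : Type*} [Fintype ι] (c : ι → ℝ)
    {R : ℝ} (hR : 0 < R) :
    ((1 / (2 * R) ^ Fintype.card ι : ℝ) : ℂ) *
        ∫ ν in Set.univ.pi (fun _ : ι => Set.Icc (-R) R), Complex.exp (Complex.I * ↑(c ⬝ᵥ ν)) =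
      ∏ j, ⨍ t in Set.Icc (-R) R, Complex.exp (Complex.I * ↑(c j * t)) := by
  have hvol :
      volume.real (Set.univ.pi fun _ : ι => Set.Icc (-R) R) = (2 * R) ^ Fintype.card ι := by
    rw [measureReal_def, volume_pi_pi, ENNReal.toReal_prod]
    simp [Real.volume_Icc, hR.le, two_mul]
  simp_rw [exp_I_mul_dotProduct]
  rw [volume_pi, ← setAverage_univ_pi_prod_eq_prod, setAverage_eq, ← volume_pi, hvol,
    Complex.real_smul, one_div, Complex.ofReal_inv]

theorem stmt_12_general {N h : ℕ} (hh : 0 < h)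
    (B : Matrix (Fin N) (Fin h) ℤ)
    (M : Matrix (Fin h) (Fin h) ℝ)
    (Λ : Fin N → ℝ)
    (hΛdef : ∀ i, Λ i = ∑ j, (B i j : ℝ) * M j ⟨0, hh⟩)
    (n n₀ : Fin N → ℕ) :
    ((∑ i, Λ i * (n i : ℝ)) ≠ (∑ i, Λ i * (n₀ i : ℝ)) →
      Tendsto (fun R : ℝ =>
        ((1 / (2 * R) ^ h : ℝ) : ℂ) *
          ∫ ν in Set.univ.pi (fun _ : Fin h => Set.Icc (-R) R),
            Complex.exp (Complex.I * ((∑ i, ((n i : ℝ) - (n₀ i : ℝ)) *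
              ∑ j, ((B.map (fun x : ℤ => (x : ℝ))) * M) i j * ν j : ℝ) : ℂ)))
        atTop (nhds 0)) ∧
    ((∑ i, Λ i * (n i : ℝ)) = (∑ i, Λ i * (n₀ i : ℝ)) →
      (∀ y : Fin h → ℝ, ∑ i, ((n i : ℝ) - (n₀ i : ℝ)) * (∑ j, (B i j : ℝ) * y j) = 0) →
      ∀ R : ℝ, 0 < R →
        ((1 / (2 * R) ^ h : ℝ) : ℂ) *
          ∫ ν in Set.univ.pi (fun _ : Fin h => Set.Icc (-R) R),
            Complex.exp (Complex.I * ((∑ i, ((n i : ℝ) - (n₀ i : ℝ)) *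
              ∑ j, ((B.map (fun x : ℤ => (x : ℝ))) * M) i j * ν j : ℝ) : ℂ)) = 1) := by
  set d : Fin N → ℝ := fun i => (n i : ℝ) - n₀ i
  set c := Matrix.vecMul d (B.map (fun x : ℤ => (x : ℝ)) * M)
  have hc : ∀ j, c j = ∑ i, d i * ∑ k, (B i k : ℝ) * M k j := fun j => by
    simp [c, Matrix.vecMul, dotProduct, Matrix.mul_apply]
  have hcube : ∀ R : ℝ, 0 < R → ((1 / (2 * R) ^ h : ℝ) : ℂ) *
      ∫ ν in Set.univ.pi (fun _ : Fin h => Set.Icc (-R) R),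
        Complex.exp (Complex.I * ((∑ i, d i *
          ∑ j, ((B.map (fun x : ℤ => (x : ℝ))) * M) i j * ν j : ℝ) : ℂ)) =
      ∏ j, ⨍ t in Set.Icc (-R) R, Complex.exp (Complex.I * ↑(c j * t)) := fun R hR => by
    convert normalized_integral_cube_exp_I_mul_dotProduct c hR using 7
    · exact (Fintype.card_fin h).symm
    · exact Matrix.dotProduct_mulVec d (B.map (fun x : ℤ => (x : ℝ)) * M) _
  refine ⟨fun hne => ?_, fun _ hortho R hR => ?_⟩
  · have hc₀ : c ⟨0, hh⟩ ≠ 0 := by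
      rw [hc]
      simp only [← hΛdef, d, mul_sub, sum_sub_distrib, mul_comm _ (Λ _)]
      exact sub_ne_zero_of_ne hne
    refine (tendsto_prod_nhds_zero_of_norm_le_one
      (fun j R => norm_setAverage_Icc_exp_I_mul_le_one (c j) R)
      (tendsto_setAverage_Icc_exp_I_mul hc₀)).congr' ?_
    filter_upwards [eventually_gt_atTop 0] with R hR
    exact (hcube R hR).symm
  · have hc₀ : ∀ j, c j = 0 := fun j => by rw [hc, hortho]
    rw [hcube R hR]
    simp only [hc₀, setAverage_Icc_exp_I_mul_zero hR, prod_const_one]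

/-- Averages of oscillating exponentials over hypercubes: with `Λ = BMe₁`,
if `Λ·n ≠ Λ·n₀` the average of `e^{i(n-n₀)·BMν}` over `[-R,R]^h` tends to `0` as `R → ∞`;
if `Λ·n = Λ·n₀` and `n - n₀` is orthogonal to the range of `B`, the average equals `1`
for every `R > 0`. -/
theorem stmt_12 {N h : ℕ} (hh : 0 < h)
    (B : Matrix (Fin N) (Fin h) ℤ)
    (hB : (B.map (fun x : ℤ => (x : ℝ))).rank = h)
    (M : Matrix (Fin h) (Fin h) ℝ) (hM : IsUnit M.det)
    (Λ : Fin N → ℝ)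
    (hΛdef : ∀ i, Λ i = ∑ j, (B i j : ℝ) * M j ⟨0, hh⟩)
    (hΛpos : ∀ i, 0 < Λ i) (n n₀ : Fin N → ℕ) :
    ((∑ i, Λ i * (n i : ℝ)) ≠ (∑ i, Λ i * (n₀ i : ℝ)) →
      Tendsto (fun R : ℝ =>
        ((1 / (2 * R) ^ h : ℝ) : ℂ) *
          ∫ ν in Set.univ.pi (fun _ : Fin h => Set.Icc (-R) R),
            Complex.exp (Complex.I * ((∑ i, ((n i : ℝ) - (n₀ i : ℝ)) *
              ∑ j, ((B.map (fun x : ℤ => (x : ℝ))) * M) i j * ν j : ℝ) : ℂ)))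
        atTop (nhds 0)) ∧
    ((∑ i, Λ i * (n i : ℝ)) = (∑ i, Λ i * (n₀ i : ℝ)) →
      (∀ y : Fin h → ℝ, ∑ i, ((n i : ℝ) - (n₀ i : ℝ)) * (∑ j, (B i j : ℝ) * y j) = 0) →
      ∀ R : ℝ, 0 < R →
        ((1 / (2 * R) ^ h : ℝ) : ℂ) *
          ∫ ν in Set.univ.pi (fun _ : Fin h => Set.Icc (-R) R),
            Complex.exp (Complex.I * ((∑ i, ((n i : ℝ) - (n₀ i : ℝ)) *
              ∑ j, ((B.map (fun x : ℤ => (x : ℝ))) * M) i j * ν j : ℝ) : ℂ)) = 1) :=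
  stmt_12_general hh B M Λ hΛdef n n₀
end

section
/- Let (G, L) be a finite connected network with a partition of vertices into V_int, V_u, V_d, and M(t) ∈ M_{2N}(ℝ) the transmission matrix M = -D(Σ_{q∈V} M^q)D where D = diag((-1)^j), M^q(t) = (Π^q_out)^T (Id_{n_q} - (2/n_q) J_{n_q}) Π^q_in for q ∈ V_int, M^q(t) = (Π^q_out)^T Π^q_in for q ∈ V_u, and M^q(t) = ((1-η_q(t))/(1+η_q(t))) (Π^q_out)^T Π^q_in for q ∈ V_d. Then M(t)^T M(t) = Id_{2N} - Σ_{q ∈ V_d} (4η_q(t)/(1+η_q(t))²) (Π^q_in)^T Π^q_in. -/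
open Finset Matrix Classical

/-- the vertex for which `x` is an inward coordinate -/
private def qinF {V : Type} {N : ℕ} (α ω : Fin N → V) (x : Fin N × Bool) : V :=
  if x.2 then ω x.1 else α x.1

/-- the vertex for which `x` is an outward coordinate -/
private def qoutF {V : Type} {N : ℕ} (α ω : Fin N → V) (x : Fin N × Bool) : V :=
  if x.2 then α x.1 else ω x.1

/-- The transmission matrix `M = -D(∑_q M^q)D` of the network wave system
(indexed here by `Fin N × Bool`, where `(j, false)` plays the role of `2j-1` and
`(j, true)` that of `2j`) satisfies
`Mᵀ M = Id - ∑_{q ∈ V_d} (4η_q(t)/(1+η_q(t))²) (Π^q_in)ᵀ Π^q_in`. -/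
theorem stmt_16 {V : Type} [Fintype V] [DecidableEq V] {N : ℕ}
    (α ω : Fin N → V) (hloop : ∀ j, α j ≠ ω j)
    (Vint Vu Vd : Set V)
    (hcover : Vint ∪ Vu ∪ Vd = Set.univ)
    (hd1 : Disjoint Vint Vu) (hd2 : Disjoint Vint Vd) (hd3 : Disjoint Vu Vd)
    (deg : V → ℕ)
    (hdeg : ∀ q, deg q = (univ.filter (fun j => α j = q ∨ ω j = q)).card)
    (hint : ∀ q ∈ Vint, 2 ≤ deg q)
    (hu : ∀ q ∈ Vu, deg q = 1) (hd : ∀ q ∈ Vd, deg q = 1)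
    (η : V → ℝ → ℝ) (hη : ∀ q ∈ Vd, ∀ t, 0 ≤ η q t) (t : ℝ)
    -- the diagonal sign matrix `D = diag((-1)^j)`
    (D : Matrix (Fin N × Bool) (Fin N × Bool) ℝ)
    (hD : D = Matrix.diagonal (fun a => if a.2 then 1 else -1))
    -- inward and outward coordinates at a vertex `q` for an edge `j ∈ E_q`
    (inIdx outIdx : V → Fin N → Fin N × Bool)
    (hin : ∀ q j, inIdx q j = (j, decide (ω j = q)))
    (hout : ∀ q j, outIdx q j = (j, decide (α j = q)))
    -- the blocks `M^q = (Π^q_out)ᵀ (λ_q Id - (2/n_q)δ_q J_{n_q}) Π^q_in`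
    (Mq : V → Matrix (Fin N × Bool) (Fin N × Bool) ℝ)
    (hMq : ∀ q a b, Mq q a b =
      if (α a.1 = q ∨ ω a.1 = q) ∧ a = outIdx q a.1 ∧
          (α b.1 = q ∨ ω b.1 = q) ∧ b = inIdx q b.1 then
        (if q ∈ Vd then (1 - η q t) / (1 + η q t) else 1) * (if a.1 = b.1 then 1 else 0)
          - (2 / (deg q : ℝ)) * (if q ∈ Vint then 1 else 0)
      else 0)
    -- the matrices `(Π^q_in)ᵀ Π^q_in`
    (Pin : V → Matrix (Fin N × Bool) (Fin N × Bool) ℝ)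
    (hPin : ∀ q a b, Pin q a b =
      if a = b ∧ (α a.1 = q ∨ ω a.1 = q) ∧ a = inIdx q a.1 then 1 else 0)
    (M : Matrix (Fin N × Bool) (Fin N × Bool) ℝ)
    (hM : M = -(D * (∑ q : V, Mq q) * D)) :
    Mᵀ * M = 1 - ∑ q : V, (if q ∈ Vd then (4 * η q t / (1 + η q t) ^ 2) else 0) • Pin q := by
  classical
  -- every coordinate is the inward coordinate of exactly one vertex
  have hself : ∀ x : Fin N × Bool,
      (α x.1 = qinF α ω x ∨ ω x.1 = qinF α ω x) ∧ x = inIdx (qinF α ω x) x.1 := by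
    rintro ⟨j, b⟩
    cases b with
    | false =>
      constructor
      · left; simp [qinF]
      · rw [hin]
        have hne : ¬ (ω j = α j) := fun h => hloop j h.symm
        simp [qinF, hne]
    | true =>
      constructor
      · right; simp [qinF]
      · rw [hin]; simp [qinF]
  have huniq : ∀ (q : V) (x : Fin N × Bool),
      (α x.1 = q ∨ ω x.1 = q) → x = inIdx q x.1 → q = qinF α ω x := by
    rintro q ⟨j, b⟩ hinc he
    rw [hin] at he
    have hb : b = decide (ω j = q) := congrArg Prod.snd he
    cases b with
    | true =>
      have hw : ω j = q := of_decide_eq_true hb.symm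
      simp [qinF, hw]
    | false =>
      have hw : ¬ (ω j = q) := of_decide_eq_false hb.symm
      have h2 := hinc.resolve_right hw
      simp [qinF, h2]
  have huniqo : ∀ (q : V) (c : Fin N × Bool),
      (α c.1 = q ∨ ω c.1 = q) → c = outIdx q c.1 → q = qoutF α ω c := by
    rintro q ⟨j, b⟩ hinc he
    rw [hout] at he
    have hb : b = decide (α j = q) := congrArg Prod.snd he
    cases b with
    | true =>
      have hw : α j = q := of_decide_eq_true hb.symm
      simp [qoutF, hw]
    | false =>
      have hw : ¬ (α j = q) := of_decide_eq_false hb.symm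
      have h2 := hinc.resolve_left hw
      simp [qoutF, h2]
  have hMqzero : ∀ q c x, q ≠ qinF α ω x → Mq q c x = 0 := by
    intro q c x hq
    rw [hMq, if_neg]
    rintro ⟨-, -, h3, h4⟩
    exact hq (huniq q x h3 h4)
  have hMqzero' : ∀ q c x, q ≠ qoutF α ω c → Mq q c x = 0 := by
    intro q c x hq
    rw [hMq, if_neg]
    rintro ⟨h1, h2, -, -⟩
    exact hq (huniqo q c h1 h2)
  have hS : ∀ c x, ∑ q : V, Mq q c x = Mq (qinF α ω x) c x := by
    intro c x
    exact Finset.sum_eq_single _ (fun q _ hq => hMqzero q c x hq)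
      (fun h => absurd (Finset.mem_univ _) h)
  subst hD
  subst hM
  ext a b
  rw [Matrix.mul_apply]
  have hRa := hself a
  have hRb := hself b
  -- value of the right-hand side entry
  have hPinz : ∀ q', q' ≠ qinF α ω a → Pin q' a b = 0 := by
    intro q' hq'
    rw [hPin, if_neg]
    rintro ⟨-, h2, h3⟩
    exact hq' (huniq q' a h2 h3)
  have hPinv : Pin (qinF α ω a) a b = if a = b then 1 else 0 := by
    rw [hPin]
    by_cases hab : a = b
    · rw [if_pos ⟨hab, hRa.1, hRa.2⟩, if_pos hab]
    · rw [if_neg (fun h => hab h.1), if_neg hab]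
  have hRHSsum : ∑ q' : V, (if q' ∈ Vd then (4 * η q' t / (1 + η q' t) ^ 2) else 0) * Pin q' a b
      = (if qinF α ω a ∈ Vd then (4 * η (qinF α ω a) t / (1 + η (qinF α ω a) t) ^ 2) else 0) *
        (if a = b then 1 else 0) := by
    rw [← hPinv]
    exact Finset.sum_eq_single _ (fun q' _ h => by rw [hPinz q' h, mul_zero])
      (fun h => absurd (Finset.mem_univ _) h)
  simp only [Matrix.sub_apply, Matrix.one_apply, Matrix.sum_apply, Matrix.smul_apply,
    smul_eq_mul]
  rw [hRHSsum]
  -- reduce the left-hand side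
  have step1 : ∑ c : Fin N × Bool,
        (-(Matrix.diagonal (fun x : Fin N × Bool => if x.2 then (1:ℝ) else -1) * (∑ q : V, Mq q) *
          Matrix.diagonal (fun x : Fin N × Bool => if x.2 then (1:ℝ) else -1)))ᵀ a c *
        (-(Matrix.diagonal (fun x : Fin N × Bool => if x.2 then (1:ℝ) else -1) * (∑ q : V, Mq q) *
          Matrix.diagonal (fun x : Fin N × Bool => if x.2 then (1:ℝ) else -1))) c b
      = ((if a.2 then (1:ℝ) else -1) * (if b.2 then (1:ℝ) else -1)) *
        ∑ c : Fin N × Bool, Mq (qinF α ω a) c a * Mq (qinF α ω b) c b := by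
    conv_rhs => rw [Finset.mul_sum]
    refine Finset.sum_congr rfl fun c _ => ?_
    simp only [Matrix.transpose_apply, Matrix.neg_apply, Matrix.mul_diagonal,
      Matrix.diagonal_mul, Matrix.sum_apply, neg_mul_neg]
    rw [hS c a, hS c b]
    have hc : (if c.2 then (1:ℝ) else -1) * (if c.2 then (1:ℝ) else -1) = 1 := by
      by_cases h : c.2 <;> simp [h]
    linear_combination (Mq (qinF α ω a) c a * Mq (qinF α ω b) c b *
      (if a.2 then (1:ℝ) else -1) * (if b.2 then (1:ℝ) else -1)) * hc
  rw [step1]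
  by_cases hq : qinF α ω a = qinF α ω b
  case neg =>
    -- different vertices: both sides vanish
    have hsum0 : ∑ c : Fin N × Bool, Mq (qinF α ω a) c a * Mq (qinF α ω b) c b = 0 := by
      apply Finset.sum_eq_zero
      intro c _
      by_cases h1 : qinF α ω a = qoutF α ω c
      · rw [hMqzero' (qinF α ω b) c b (fun hb' => hq (h1.trans hb'.symm)), mul_zero]
      · rw [hMqzero' (qinF α ω a) c a h1, zero_mul]
    have hab : a ≠ b := fun h => hq (by rw [h])
    rw [hsum0, mul_zero, if_neg hab]
    ring
  case pos =>
    have ha1 : α a.1 = qinF α ω a ∨ ω a.1 = qinF α ω a := hRa.1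
    have hb1 : α b.1 = qinF α ω a ∨ ω b.1 = qinF α ω a := by rw [hq]; exact hRb.1
    rw [← hq]
    set q : V := qinF α ω a with hqdef
    set l : ℝ := if q ∈ Vd then (1 - η q t) / (1 + η q t) else 1 with hl
    set m : ℝ := 2 / (deg q : ℝ) * (if q ∈ Vint then 1 else 0) with hm
    have hMq2 : ∀ (x : Fin N × Bool), q = qinF α ω x → ∀ c, Mq q c x =
        if (α c.1 = q ∨ ω c.1 = q) ∧ c = outIdx q c.1 then
          l * (if c.1 = x.1 then 1 else 0) - m else 0 := by
      intro x hx c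
      rw [hMq]
      by_cases hcnd : (α c.1 = q ∨ ω c.1 = q) ∧ c = outIdx q c.1
      · have e1 : α x.1 = q ∨ ω x.1 = q := by rw [hx]; exact (hself x).1
        have e2 : x = inIdx q x.1 := by rw [hx]; exact (hself x).2
        rw [if_pos ⟨hcnd.1, hcnd.2, e1, e2⟩, if_pos hcnd, hl, hm]
      · rw [if_neg (fun h => hcnd ⟨h.1, h.2.1⟩), if_neg hcnd]
    have hsum : ∑ c : Fin N × Bool, Mq q c a * Mq q c b
        = l * l * (if a.1 = b.1 then 1 else 0) - l * m - l * m + (deg q : ℝ) * (m * m) := by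
      have ea := hMq2 a hqdef
      have eb := hMq2 b hq
      calc ∑ c : Fin N × Bool, Mq q c a * Mq q c b
          = ∑ c : Fin N × Bool,
              (if (α c.1 = q ∨ ω c.1 = q) ∧ c = outIdx q c.1 then
                (l * (if c.1 = a.1 then 1 else 0) - m) *
                  (l * (if c.1 = b.1 then 1 else 0) - m)
              else 0) := by
            refine Finset.sum_congr rfl fun c _ => ?_
            rw [ea c, eb c]
            by_cases h : (α c.1 = q ∨ ω c.1 = q) ∧ c = outIdx q c.1
            · rw [if_pos h, if_pos h, if_pos h]
            · rw [if_neg h, if_neg h, if_neg h, mul_zero]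
        _ = ∑ j : Fin N,
              (if (α j = q ∨ ω j = q) then
                (l * (if j = a.1 then 1 else 0) - m) *
                  (l * (if j = b.1 then 1 else 0) - m)
              else 0) := by
            rw [Fintype.sum_prod_type]
            refine Finset.sum_congr rfl fun j _ => ?_
            rw [Fintype.sum_bool]
            dsimp only
            rw [hout]
            by_cases hα : α j = q
            · simp [hα]
            · by_cases hω : ω j = q
              · simp [hα, hω]
              · simp [hα, hω]
        _ = ∑ j : Fin N,
              ((if j = a.1 then l * l * (if a.1 = b.1 then 1 else 0) else 0)
               - (if j = a.1 then l * m else 0)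
               - (if j = b.1 then l * m else 0)
               + (if (α j = q ∨ ω j = q) then m * m else 0)) := by
            refine Finset.sum_congr rfl fun j _ => ?_
            split_ifs <;> first | ring1 | (exfalso; subst_vars; tauto)
        _ = l * l * (if a.1 = b.1 then 1 else 0) - l * m - l * m
              + (deg q : ℝ) * (m * m) := by
            rw [Finset.sum_add_distrib, Finset.sum_sub_distrib, Finset.sum_sub_distrib]
            simp only [Finset.sum_ite_eq', Finset.mem_univ, if_true]
            congr 1
            rw [← Finset.sum_filter, Finset.sum_const, nsmul_eq_mul, ← hdeg q]
    rw [hsum]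
    by_cases hab : a = b
    · subst hab
      have e1 : (if a = a then (1:ℝ) else 0) = 1 := if_pos rfl
      have e2 : (if a.1 = a.1 then (1:ℝ) else 0) = 1 := if_pos rfl
      have e3 : (if a.2 then (1:ℝ) else -1) * (if a.2 then (1:ℝ) else -1) = 1 := by
        by_cases h : a.2 <;> simp [h]
      rw [e1, e2, e3]
      by_cases hqd : q ∈ Vd
      · have hm0 : m = 0 := by
          rw [hm, if_neg (fun h => Set.disjoint_left.mp hd2 h hqd), mul_zero]
        have hne : (1 : ℝ) + η q t ≠ 0 := by
          have h0 := hη q hqd t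
          intro h; linarith
        rw [hm0, hl, if_pos hqd, if_pos hqd]
        field_simp
        ring
      · rw [hl, if_neg hqd, if_neg hqd]
        by_cases hqi : q ∈ Vint
        · have hm' : m = 2 / (deg q : ℝ) := by rw [hm, if_pos hqi, mul_one]
          have hdq : (deg q : ℝ) ≠ 0 := by
            have h2 := hint q hqi
            exact Nat.cast_ne_zero.mpr (by omega)
          rw [hm']
          field_simp
          ring
        · have hm0 : m = 0 := by rw [hm, if_neg hqi, mul_zero]
          rw [hm0]
          ring
    · have ha1b1 : ¬ (a.1 = b.1) := by
        intro h
        have e1 : a = inIdx q a.1 := by rw [hqdef]; exact hRa.2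
        have e2 : b = inIdx q b.1 := by rw [hq]; exact hRb.2
        exact hab (e1.trans (by rw [h, ← e2]))
      rw [if_neg ha1b1, if_neg hab]
      have hz : l * l * 0 - l * m - l * m + (deg q : ℝ) * (m * m) = 0 := by
        by_cases hqi : q ∈ Vint
        · have hqd : q ∉ Vd := fun h => Set.disjoint_left.mp hd2 hqi h
          have hdq : (deg q : ℝ) ≠ 0 := by
            have h2 := hint q hqi
            exact Nat.cast_ne_zero.mpr (by omega)
          rw [hl, if_neg hqd, hm, if_pos hqi, mul_one]
          field_simp
          ring
        · rw [hm, if_neg hqi, mul_zero]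
          ring
      rw [hz, mul_zero]
      ring
end

section
/- Let L ∈ (ℝ_{>0})^N and for t ≥ 0 let Y_t = #{classes [n] of n ∈ ℕ^N under the relation L·n = L·n' with t < L·n ≤ t + L_max}. Then there exists C > 0 depending only on L and N such that Y_t ≤ C(t+1)^{N-1} for all t ≥ 0. -/
open Finset

/-- The number `Y_t` of classes of `n ∈ ℕ^N` (for the relation
`L·n = L·n'`) with `t < L·n ≤ t + L_max`, i.e. the number of values of `L·n` in
`(t, t + L_max]`, grows at most like `C(t+1)^{N-1}`. -/
theorem stmt_19 {N : ℕ} (L : Fin N → ℝ) (hL : ∀ i, 0 < L i)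
    (Lmax : ℝ) (hLmax : IsGreatest (Set.range L) Lmax) :
    ∃ C : ℝ, 0 < C ∧ ∀ t : ℝ, 0 ≤ t →
      (({v : ℝ | (∃ n : Fin N → ℕ, v = ∑ i, L i * (n i : ℝ)) ∧
          t < v ∧ v ≤ t + Lmax}.ncard : ℝ))
        ≤ C * (t + 1) ^ (N - 1) := by
  obtain ⟨i0, hi0⟩ := hLmax.1
  have hLmax0 : 0 < Lmax := hi0 ▸ hL i0
  set C : ℝ := ∏ i ∈ Finset.univ.erase i0, ((1 + Lmax) / L i + 1) with hC
  have hCpos : 0 < C := Finset.prod_pos (fun i _ => by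
    have h1 := hL i
    have h2 : 0 < (1 + Lmax) / L i := div_pos (by linarith) h1
    linarith)
  refine ⟨C, hCpos, fun t ht => ?_⟩
  have htL : 0 ≤ t + Lmax := by linarith
  set B : Fin N → ℕ := fun i => ⌊(t + Lmax) / L i⌋₊ with hB
  set g : (Fin N → ℕ) → ℝ := fun n => ∑ i, L i * (n i : ℝ) with hg
  set T : Finset (Fin N → ℕ) :=
    (Fintype.piFinset fun i => Finset.range (B i + 1)).filter
      (fun n => t < g n ∧ g n ≤ t + Lmax) with hT
  -- Step 1: the value set is contained in the image of T under g
  have hsub : {v : ℝ | (∃ n : Fin N → ℕ, v = ∑ i, L i * (n i : ℝ)) ∧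
      t < v ∧ v ≤ t + Lmax} ⊆ ↑(T.image g) := by
    rintro v ⟨⟨n, rfl⟩, h1, h2⟩
    simp only [Finset.coe_image, Set.mem_image, Finset.mem_coe]
    refine ⟨n, ?_, rfl⟩
    simp only [hT, Finset.mem_filter, Fintype.mem_piFinset, Finset.mem_range]
    refine ⟨fun i => ?_, h1, h2⟩
    have hterm : L i * (n i : ℝ) ≤ t + Lmax :=
      le_trans (Finset.single_le_sum (f := fun i => L i * (n i : ℝ))
        (fun j _ => mul_nonneg (hL j).le (Nat.cast_nonneg _)) (Finset.mem_univ i)) h2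
    have h3 : (n i : ℝ) ≤ (t + Lmax) / L i := by
      rw [le_div_iff₀ (hL i)]
      linarith [hterm]
    have h4 : n i ≤ B i := Nat.le_floor h3
    omega
  have step1 : ({v : ℝ | (∃ n : Fin N → ℕ, v = ∑ i, L i * (n i : ℝ)) ∧
      t < v ∧ v ≤ t + Lmax}.ncard : ℝ) ≤ (T.card : ℝ) := by
    have h1 := Set.ncard_le_ncard hsub (Finset.finite_toSet _)
    rw [Set.ncard_coe_finset] at h1
    exact_mod_cast le_trans h1 (Finset.card_image_le)
  -- Step 2: T injects into the finset of "tails" by zeroing coordinate i0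
  set f : (Fin N → ℕ) → (Fin N → ℕ) := fun n => Function.update n i0 0 with hf
  have hinj : Set.InjOn f T := by
    intro n hn m hm h
    have hne : ∀ i, i ≠ i0 → n i = m i := by
      intro i hi
      have := congrFun h i
      simpa [hf, Function.update_of_ne hi] using this
    rw [Finset.mem_coe, hT, Finset.mem_filter] at hn hm
    obtain ⟨-, hn1, hn2⟩ := hn
    obtain ⟨-, hm1, hm2⟩ := hm
    have hsum : g n - g m = L i0 * ((n i0 : ℝ) - (m i0 : ℝ)) := by
      have : g n - g m = ∑ i, (L i * (n i : ℝ) - L i * (m i : ℝ)) := by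
        simp [hg, Finset.sum_sub_distrib]
      rw [this, Finset.sum_eq_single i0]
      · ring
      · intro i _ hi
        rw [hne i hi]; ring
      · intro hmem; exact absurd (Finset.mem_univ i0) hmem
    have habs : |L i0 * ((n i0 : ℝ) - (m i0 : ℝ))| < Lmax := by
      rw [← hsum, abs_lt]
      constructor <;> linarith
    rw [abs_mul, abs_of_pos (hL i0), hi0] at habs
    have h5 : |(n i0 : ℝ) - (m i0 : ℝ)| < 1 := by
      by_contra hcon
      push_neg at hcon
      nlinarith
    have h6 : ((n i0 : ℤ) : ℝ) = ((n i0 : ℕ) : ℝ) := by push_cast; ring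
    have h7 : |((n i0 : ℤ) - (m i0 : ℤ) : ℝ)| < 1 := by push_cast; push_cast at h5; exact h5
    rw [← Int.cast_sub, ← Int.cast_abs] at h7
    have h8 : |(n i0 : ℤ) - (m i0 : ℤ)| < 1 := by exact_mod_cast h7
    have h9 : n i0 = m i0 := by
      rw [abs_lt] at h8; omega
    funext i
    by_cases hii : i = i0
    · rw [hii]; exact h9
    · exact hne i hii
  have hcard : T.card = (T.image f).card := (Finset.card_image_of_injOn hinj).symm
  -- Step 3: bound the card of the image
  have himgsub : T.image f ⊆ Fintype.piFinset
      (fun i => if i = i0 then ({0} : Finset ℕ) else Finset.range (B i + 1)) := by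
    intro a ha
    rw [Finset.mem_image] at ha
    obtain ⟨n, hn, rfl⟩ := ha
    simp only [hT, Finset.mem_filter, Fintype.mem_piFinset, Finset.mem_range] at hn
    rw [Fintype.mem_piFinset]
    intro i
    by_cases hii : i = i0
    · subst hii
      simp [hf]
    · simp only [hii, if_false, Finset.mem_range, hf, Function.update_of_ne hii]
      exact hn.1 i
  have hcard2 : (T.image f).card ≤ ∏ i ∈ Finset.univ.erase i0, (B i + 1) := by
    refine le_trans (Finset.card_le_card himgsub) ?_
    rw [Fintype.card_piFinset,
      ← Finset.mul_prod_erase Finset.univ _ (Finset.mem_univ i0), if_pos rfl,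
      Finset.card_singleton, one_mul]
    apply le_of_eq
    apply Finset.prod_congr rfl
    intro i hi
    rw [if_neg (Finset.ne_of_mem_erase hi), Finset.card_range]
  -- Step 4: numerical bound
  have step4 : ((∏ i ∈ Finset.univ.erase i0, (B i + 1) : ℕ) : ℝ)
      ≤ C * (t + 1) ^ (N - 1) := by
    push_cast
    have hpt : ∀ i ∈ Finset.univ.erase i0,
        ((B i : ℝ) + 1) ≤ ((1 + Lmax) / L i + 1) * (t + 1) := by
      intro i _
      have hfl : (B i : ℝ) ≤ (t + Lmax) / L i := Nat.floor_le (div_nonneg htL (hL i).le)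
      have hnum : t + Lmax ≤ (1 + Lmax) * (t + 1) := by nlinarith
      have h1 : (t + Lmax) / L i ≤ ((1 + Lmax) * (t + 1)) / L i :=
        (div_le_div_iff_of_pos_right (hL i)).mpr hnum
      have h2 : ((1 + Lmax) * (t + 1)) / L i = (1 + Lmax) / L i * (t + 1) := by ring
      have h3 : ((1 + Lmax) / L i + 1) * (t + 1) = (1 + Lmax) / L i * (t + 1) + (t + 1) := by
        ring
      linarith
    calc ∏ i ∈ Finset.univ.erase i0, ((B i : ℝ) + 1)
        ≤ ∏ i ∈ Finset.univ.erase i0, ((1 + Lmax) / L i + 1) * (t + 1) :=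
          Finset.prod_le_prod (fun i _ => add_nonneg (Nat.cast_nonneg _) zero_le_one) hpt
      _ = C * (t + 1) ^ (Finset.univ.erase i0).card := by
          rw [Finset.prod_mul_distrib, Finset.prod_const]
      _ = C * (t + 1) ^ (N - 1) := by
          rw [Finset.card_erase_of_mem (Finset.mem_univ i0), Finset.card_univ,
            Fintype.card_fin]
  calc ({v : ℝ | (∃ n : Fin N → ℕ, v = ∑ i, L i * (n i : ℝ)) ∧
      t < v ∧ v ≤ t + Lmax}.ncard : ℝ) ≤ (T.card : ℝ) := step1
    _ = ((T.image f).card : ℝ) := by exact_mod_cast hcard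
    _ ≤ ((∏ i ∈ Finset.univ.erase i0, (B i + 1) : ℕ) : ℝ) := by exact_mod_cast hcard2
    _ ≤ C * (t + 1) ^ (N - 1) := step4
end
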